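/- arXiv:math/0107228 — 11 statements merged into one kernel-verified Lean document; each statement's English description precedes it below -/
import Mathlib

section
/- Let m ≥ 3 and let p, q : Fin m → ℝ both be monotone nondecreasing with p(0) = q(0) = 0 and with all values in [0, π). If there exist a real m×m matrix A with det A = 1 and a nonzero complex number λ such that Aᵀ · diag(e^{i p(0)}, …, e^{i p(m−1)}) · A = λ · diag(e^{i q(0)}, …, e^{i q(m−1)}), then p = q. -/
/-!
Comparing the `(0, 0)` entries of `Aᵀ D_p A = λ D_q` and of the inverted relation
`A⁻ᵀ D_q A⁻¹ = λ⁻¹ D_p` exhibits `λ` and `λ⁻¹` as nonnegative combinations of the numbers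
`e^{i p j}`, resp. `e^{i q j}`, which lie in the closed upper half plane; hence `λ` is real.
For real `A`, the matrix `Q̄⁻¹ Q` undergoes a similarity when `Q` is replaced by `Aᵀ Q A`, and it
is unchanged when `Q` is multiplied by a nonzero real number. So `diag (e^{2 i p j})` and
`diag (e^{2 i q j})` have the same characteristic polynomial, i.e. the same multiset of
eigenvalues. As `x ↦ e^{2 i x}` is injective on `[0, π)`, the multisets of values of `p` and `q`
agree, and monotonicity forces `p = q`.
-/

open scoped Matrix ComplexConjugate
open Complex Matrix Polynomial

lemma Complex.im_eq_zero_of_im_nonneg_of_inv_im_nonneg {z : ℂ} (hz : 0 ≤ z.im)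
    (hz' : 0 ≤ z⁻¹.im) : z.im = 0 := by
  by_contra hne
  have hpos : 0 < z.im := hz.lt_of_ne' hne
  have hz0 : z ≠ 0 := fun h => by simp [h] at hpos
  rw [inv_im] at hz'
  exact hz'.not_gt (div_neg_of_neg_of_pos (neg_neg_of_pos hpos) (normSq_pos.mpr hz0))

lemma Complex.im_exp_I_mul_nonneg {x : ℝ} (h0 : 0 ≤ x) (hπ : x ≤ Real.pi) :
    0 ≤ (exp (I * x)).im := by
  rw [mul_comm, exp_ofReal_mul_I_im]
  exact Real.sin_nonneg_of_nonneg_of_le_pi h0 hπ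

lemma Complex.exp_I_mul_sq_injOn :
    Set.InjOn (fun x : ℝ => exp (I * x) ^ 2) (Set.Ico 0 Real.pi) := by
  intro x hx y hy h
  have hcircle : ∀ t : ℝ, exp (I * t) ^ 2 = Circle.exp (2 * t) := fun t => by
    rw [Circle.coe_exp, ← exp_nat_mul]; push_cast; ring_nf
  simp only [hcircle] at h
  have := Circle.exp_injOn_Ico (a := 0) (b := 2 * Real.pi) (by linarith)
    ⟨by linarith [hx.1], by linarith [hx.2]⟩ ⟨by linarith [hy.1], by linarith [hy.2]⟩
    (Subtype.ext h)
  linarith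

lemma Multiset.eq_of_map_eq_of_injOn {α β : Type*} [Nonempty α] {s t : Multiset α}
    {f : α → β} {S : Set α} (hf : Set.InjOn f S) (hs : ∀ a ∈ s, a ∈ S) (ht : ∀ a ∈ t, a ∈ S)
    (h : s.map f = t.map f) : s = t := by
  have hinv : ∀ u : Multiset α, (∀ a ∈ u, a ∈ S) → (u.map f).map (Function.invFunOn f S) = u :=
    fun u hu => by
      rw [Multiset.map_map]
      exact (Multiset.map_congr rfl fun a ha => hf.leftInvOn_invFunOn (hu a ha)).trans
        (Multiset.map_id' u)
  rw [← hinv s hs, h, hinv t ht]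

lemma Monotone.eq_of_map_univ_val_eq {α : Type*} [PartialOrder α] {m : ℕ} {f g : Fin m → α}
    (hf : Monotone f) (hg : Monotone g)
    (h : Finset.univ.val.map f = Finset.univ.val.map g) : f = g := by
  rw [Fin.univ_val_map, Fin.univ_val_map, Multiset.coe_eq_coe] at h
  exact List.ofFn_injective (h.eq_of_sortedLE hf.sortedLE_ofFn hg.sortedLE_ofFn)

lemma Polynomial.map_univ_val_eq_of_prod_X_sub_C_eq {R ι : Type*} [CommRing R] [IsDomain R]
    [Fintype ι] {f g : ι → R} (h : ∏ i, (X - C (f i)) = ∏ i, (X - C (g i))) :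
    Finset.univ.val.map f = Finset.univ.val.map g := by
  have hprod : ∀ f : ι → R,
      ∏ i, (X - C (f i)) = ((Finset.univ.val.map f).map fun a => X - C a).prod :=
    fun f => by rw [Multiset.map_map]; rfl
  simpa only [hprod, roots_multiset_prod_X_sub_C] using congrArg roots h

namespace Matrix

variable {n : Type*} [Fintype n] [DecidableEq n]

lemma transpose_mul_mul_eq_inv_smul_of_mul_eq_one {K : Type*} [Field K]
    {M N D D' : Matrix n n K} {c : K} (hc : c ≠ 0) (hMN : M * N = 1)
    (h : Mᵀ * D * M = c • D') : Nᵀ * D' * N = c⁻¹ • D := by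
  have hD' : D' = c⁻¹ • (Mᵀ * D * M) := by
    rw [h, smul_smul, inv_mul_cancel₀ hc, one_smul]
  rw [hD', Matrix.mul_smul, Matrix.smul_mul]
  congr 1
  calc Nᵀ * (Mᵀ * D * M) * N = (M * N)ᵀ * D * (M * N) := by
        simp only [transpose_mul, Matrix.mul_assoc]
    _ = D := by simp [hMN]

lemma ofReal_map_mul_ofReal_map_inv {A : Matrix n n ℝ} (hA : IsUnit A.det) :
    A.map ofReal * A⁻¹.map ofReal = 1 := by
  change A.map ofRealHom * A⁻¹.map ofRealHom = 1
  rw [← Matrix.map_mul, mul_nonsing_inv A hA, Matrix.map_one _ (map_zero _) (map_one _)]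

lemma isUnit_det_ofReal_map {A : Matrix n n ℝ} (hA : IsUnit A.det) :
    IsUnit (A.map ofReal).det := by
  rw [show A.map ofReal = ofRealHom.mapMatrix A from rfl, ← RingHom.map_det]
  exact hA.map _

lemma im_nonneg_of_transpose_mul_diagonal_mul_eq_smul (A : Matrix n n ℝ)
    {d e : n → ℂ} {c : ℂ} (hd : ∀ j, 0 ≤ (d j).im) (i : n) (hi : e i = 1)
    (h : (A.map ofReal)ᵀ * diagonal d * A.map ofReal = c • diagonal e) : 0 ≤ c.im := by
  have hentry := congrFun (congrFun h i) i
  rw [smul_apply, diagonal_apply_eq, hi, smul_eq_mul, mul_one, Matrix.mul_apply] at hentry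
  rw [← hentry, im_sum]
  refine Finset.sum_nonneg fun j _ => ?_
  have hterm : ((A.map ofReal)ᵀ * diagonal d) i j * A.map ofReal j i =
      ((A j i * A j i : ℝ) : ℂ) * d j := by
    simp only [mul_diagonal, transpose_apply, map_apply]; push_cast; ring
  rw [hterm, im_ofReal_mul]
  exact mul_nonneg (mul_self_nonneg _) (hd j)

noncomputable def conjInvMul (Q : Matrix n n ℂ) : Matrix n n ℂ := (Q.map conj)⁻¹ * Q

lemma conjInvMul_ofReal_congr {A : Matrix n n ℝ} (hA : IsUnit A.det) (Q : Matrix n n ℂ) :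
    conjInvMul ((A.map ofReal)ᵀ * Q * A.map ofReal) =
      (A.map ofReal)⁻¹ * conjInvMul Q * A.map ofReal := by
  set M := A.map ofReal
  have hMconj : M.map conj = M := by ext i j; simp [M]
  have hconj : (Mᵀ * Q * M).map conj = Mᵀ * Q.map conj * M := by
    rw [Matrix.map_mul, Matrix.map_mul, transpose_map, hMconj]
  rw [conjInvMul, conjInvMul, hconj, mul_inv_rev, mul_inv_rev]
  simp only [Matrix.mul_assoc]
  rw [← Matrix.mul_assoc Mᵀ⁻¹,
    nonsing_inv_mul _ (isUnit_det_transpose M (isUnit_det_ofReal_map hA)), Matrix.one_mul]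

lemma charpoly_conjInvMul_ofReal_congr {A : Matrix n n ℝ} (hA : IsUnit A.det)
    (Q : Matrix n n ℂ) :
    (conjInvMul ((A.map ofReal)ᵀ * Q * A.map ofReal)).charpoly = (conjInvMul Q).charpoly := by
  have hM : IsUnit (A.map ofReal) := (isUnit_iff_isUnit_det _).mpr (isUnit_det_ofReal_map hA)
  rw [conjInvMul_ofReal_congr hA, ← hM.unit_spec, charpoly_units_conj']

lemma conjInvMul_diagonal {d : n → ℂ} (hd : ∀ j, d j ≠ 0) :
    conjInvMul (diagonal d) = diagonal fun j => d j / conj (d j) := by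
  have hinv : (diagonal fun j => conj (d j))⁻¹ = diagonal fun j => (conj (d j))⁻¹ := by
    refine inv_eq_left_inv ?_
    rw [diagonal_mul_diagonal, ← diagonal_one]
    congr 1
    ext j
    exact inv_mul_cancel₀ (by simpa using hd j)
  rw [conjInvMul, diagonal_map (map_zero _), hinv, diagonal_mul_diagonal]
  simp only [div_eq_inv_mul]

lemma conjInvMul_ofReal_smul_diagonal_exp {r : ℝ} (hr : r ≠ 0) (p : n → ℝ) :
    conjInvMul ((r : ℂ) • diagonal fun j => exp (I * p j)) =
      diagonal fun j => exp (I * p j) ^ 2 := by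
  rw [← diagonal_smul, conjInvMul_diagonal fun j => by simp [hr, exp_ne_zero]]
  congr 1
  ext j
  simp only [Pi.smul_apply, smul_eq_mul, map_mul, conj_ofReal]
  rw [mul_div_mul_left _ _ (ofReal_ne_zero.mpr hr), ← Complex.exp_conj, map_mul, conj_I,
    conj_ofReal, neg_mul, Complex.exp_neg, div_inv_eq_mul, sq]

end Matrix

/-- **Uniqueness of the normal form for hyperquadrics without real points.**
If two diagonal matrices `diag (e^{i p j})` and `diag (e^{i q j})`, with `p, q` monotone
nondecreasing, vanishing at `0`, and taking values in `[0, π)`, are `SL(m,ℝ)`-equivalent up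
to a nonzero complex scalar, then `p = q` (here `m ≥ 3`). -/
theorem normal_form_unique (m : ℕ) (hm : 3 ≤ m) (p q : Fin m → ℝ)
    (hpmono : Monotone p) (hqmono : Monotone q)
    (hp0 : p ⟨0, by omega⟩ = 0) (hq0 : q ⟨0, by omega⟩ = 0)
    (hpbd : ∀ j, 0 ≤ p j ∧ p j < Real.pi) (hqbd : ∀ j, 0 ≤ q j ∧ q j < Real.pi)
    (A : Matrix (Fin m) (Fin m) ℝ) (hA : A.det = 1) (lam : ℂ) (hlam : lam ≠ 0)
    (heq : (A.map (fun a => (a : ℂ)))ᵀ *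
        Matrix.diagonal (fun j => Complex.exp (Complex.I * (p j : ℂ))) *
        (A.map (fun a => (a : ℂ)))
      = lam • Matrix.diagonal (fun j => Complex.exp (Complex.I * (q j : ℂ)))) :
    p = q := by
  have hAu : IsUnit A.det := hA ▸ isUnit_one
  have heq_inv := transpose_mul_mul_eq_inv_smul_of_mul_eq_one hlam
    (ofReal_map_mul_ofReal_map_inv hAu) heq
  have hlam_real : (lam.re : ℂ) = lam := by
    let i₀ : Fin m := ⟨0, by omega⟩
    refine Complex.ext rfl (Eq.symm (im_eq_zero_of_im_nonneg_of_inv_im_nonneg ?_ ?_))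
    · exact im_nonneg_of_transpose_mul_diagonal_mul_eq_smul A
        (fun j => im_exp_I_mul_nonneg (hpbd j).1 (hpbd j).2.le) i₀ (by simp [i₀, hq0]) heq
    · exact im_nonneg_of_transpose_mul_diagonal_mul_eq_smul A⁻¹
        (fun j => im_exp_I_mul_nonneg (hqbd j).1 (hqbd j).2.le) i₀ (by simp [i₀, hp0]) heq_inv
  have hre : lam.re ≠ 0 := fun h => hlam (by rw [← hlam_real, h, ofReal_zero])
  have hchar := charpoly_conjInvMul_ofReal_congr hAu (diagonal fun j => exp (I * p j))
  have hconj_p := conjInvMul_ofReal_smul_diagonal_exp one_ne_zero p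
  rw [ofReal_one, one_smul] at hconj_p
  rw [heq, ← hlam_real, conjInvMul_ofReal_smul_diagonal_exp hre, hconj_p, charpoly_diagonal,
    charpoly_diagonal] at hchar
  have hvalues : (Finset.univ.val.map q).map (fun x : ℝ => exp (I * x) ^ 2) =
      (Finset.univ.val.map p).map (fun x : ℝ => exp (I * x) ^ 2) := by
    simpa only [Multiset.map_map, Function.comp_def] using
      map_univ_val_eq_of_prod_X_sub_C_eq hchar
  refine (hqmono.eq_of_map_univ_val_eq hpmono ?_).symm
  exact Multiset.eq_of_map_eq_of_injOn exp_I_mul_sq_injOn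
    (Multiset.forall_mem_map_iff.mpr fun j _ => hqbd j)
    (Multiset.forall_mem_map_iff.mpr fun j _ => hpbd j) hvalues
end

section
/- Let m ≥ 2 and let v, w and v', w' be vectors in ℝ^m such that (v, w) is linearly independent and (v', w') is linearly independent. Then the following are equivalent: (1) there exists t₀ ∈ ℝ such that for every s ∈ ℝ, the vector cos(s + t₀)·v + sin(s + t₀)·w is a positive real multiple of cos(s)·v' + sin(s)·w'; (2) there exists a nonzero complex number λ with v' + i·w' = λ·(v + i·w) in ℂ^m (componentwise). In other words, the unit-speed parametrized curves γ_{(v,w)}(s) = [cos(s)·v + sin(s)·w]₊ and γ_{(v',w')}(s) = [cos(s)·v' + sin(s)·w']₊ in the space of rays parametrize the same oriented line with the same speed, up to a shift of parameter, if and only if [[v + i w]] = [[v' + i w']] as points of ℂℙ^{m−1} ∖ ℝℙ^{m−1}. -/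
/-!
Identify `c : ℂ` with `c.re • v + c.im • w`. For independent `v, w` this is a real-linear
injection `ℂ → ℝᵐ` sending `exp (s i)` to `cos s • v + sin s • w`, and `v' + i w' = λ (v + i w)`
says exactly that `v'` and `w'` are the images of `μ` and `i μ`, where `μ = conj λ`. Then
`cos s • v' + sin s • w'` is the image of `exp (s i) μ = ‖μ‖ exp ((s + arg μ) i)`, a positive
multiple of the curve shifted by `arg μ`. Conversely, the parameters `s = 0` and `s = π / 2`
show that `v'` and `w'` are the images of `u / r₀` and `i u / r₁` with `u = exp (t₀ i)`, and
injectivity at `s = π / 4` forces `r₀ = r₁`.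
-/

open Real Complex ComplexConjugate

section PlaneMap

variable {E : Type*} [AddCommGroup E] [Module ℝ E]

def planeMap (v w : E) : ℂ →ₗ[ℝ] E where
  toFun c := c.re • v + c.im • w
  map_add' a b := by simp only [add_re, add_im, add_smul]; abel
  map_smul' a c := by
    simp only [smul_re, smul_im, smul_eq_mul, mul_smul, smul_add, RingHom.id_apply]

variable {v w v' w' : E}

@[simp]
theorem planeMap_apply (v w : E) (c : ℂ) : planeMap v w c = c.re • v + c.im • w := rfl

theorem planeMap_exp_mul_I (v w : E) (s : ℝ) :
    planeMap v w (exp (s * I)) = Real.cos s • v + Real.sin s • w := by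
  simp [exp_ofReal_mul_I_re, exp_ofReal_mul_I_im]

theorem planeMap_injective (h : LinearIndependent ℝ ![v, w]) :
    Function.Injective (planeMap v w) := by
  rw [← LinearMap.ker_eq_bot, LinearMap.ker_eq_bot']
  intro c hc
  obtain ⟨hre, him⟩ := LinearIndependent.pair_iff.mp h c.re c.im hc
  exact Complex.ext hre him

theorem planeMap_planeMap_mul_I (v w : E) (μ c : ℂ) :
    planeMap (planeMap v w μ) (planeMap v w (I * μ)) c = planeMap v w (c * μ) := by
  rw [planeMap_apply, ← map_smul, ← map_smul, ← map_add]
  congr 1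
  rw [Complex.real_smul, Complex.real_smul]
  linear_combination μ * re_add_im c

theorem exists_shift_of_eq_planeMap {μ : ℂ} (hμ : μ ≠ 0) :
    ∃ t₀ : ℝ, ∀ s : ℝ, ∃ r : ℝ, 0 < r ∧
      Real.cos (s + t₀) • v + Real.sin (s + t₀) • w =
        r • (Real.cos s • planeMap v w μ + Real.sin s • planeMap v w (I * μ)) := by
  refine ⟨arg μ, fun s => ⟨‖μ‖⁻¹, by positivity, ?_⟩⟩
  have hpolar : exp (s * I) * μ = ‖μ‖ • exp ((s + arg μ : ℝ) * I) := by
    conv_lhs => rw [← norm_mul_exp_arg_mul_I μ]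
    rw [Complex.real_smul, ofReal_add, add_mul, Complex.exp_add]
    ring
  rw [← planeMap_exp_mul_I, ← planeMap_exp_mul_I, planeMap_planeMap_mul_I, hpolar, map_smul,
    smul_smul, inv_mul_cancel₀ (norm_ne_zero_iff.mpr hμ), one_smul]

theorem exists_eq_planeMap_of_shift (h : LinearIndependent ℝ ![v, w])
    (H : ∃ t₀ : ℝ, ∀ s : ℝ, ∃ r : ℝ, 0 < r ∧
      Real.cos (s + t₀) • v + Real.sin (s + t₀) • w = r • (Real.cos s • v' + Real.sin s • w')) :
    ∃ μ : ℂ, μ ≠ 0 ∧ v' = planeMap v w μ ∧ w' = planeMap v w (I * μ) := by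
  obtain ⟨t₀, H⟩ := H
  set u := exp (t₀ * I)
  have hshift (s : ℝ) :
      Real.cos (s + t₀) • v + Real.sin (s + t₀) • w = planeMap v w (exp (s * I) * u) := by
    rw [← planeMap_exp_mul_I, ofReal_add, add_mul, Complex.exp_add]
  obtain ⟨r₀, hr₀, e₀⟩ := H 0
  obtain ⟨r₁, hr₁, e₁⟩ := H (π / 2)
  obtain ⟨r₂, hr₂, e₂⟩ := H (π / 4)
  rw [hshift] at e₀ e₁ e₂
  simp only [ofReal_zero, zero_mul, Complex.exp_zero, one_mul, Real.cos_zero, Real.sin_zero,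
    one_smul, zero_smul, add_zero] at e₀
  simp only [ofReal_div, ofReal_ofNat, exp_pi_div_two_mul_I, Real.cos_pi_div_two,
    Real.sin_pi_div_two, one_smul, zero_smul, zero_add] at e₁
  have hv' : v' = planeMap v w (r₀⁻¹ • u) := by
    rw [map_smul, e₀, inv_smul_smul₀ hr₀.ne']
  have hw' : w' = planeMap v w (I * (r₁⁻¹ • u)) := by
    rw [mul_smul_comm, map_smul, e₁, inv_smul_smul₀ hr₁.ne']
  have hr : r₀ = r₁ := by
    rw [hv', hw', ← map_smul, ← map_smul, ← map_add, ← map_smul] at e₂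
    have e := planeMap_injective h e₂
    rw [exp_mul_I, ← ofReal_cos, ← ofReal_sin, Real.sin_pi_div_four, ← Real.cos_pi_div_four] at e
    have hc : Real.cos (π / 4) ≠ 0 := by rw [Real.cos_pi_div_four]; positivity
    generalize Real.cos (π / 4) = c at e hc
    have key : (⟨c, c⟩ : ℂ) = ⟨r₂ * c * r₀⁻¹, r₂ * c * r₁⁻¹⟩ := by
      apply mul_right_cancel₀ (exp_ne_zero (t₀ * I))
      rw [mk_eq_add_mul_I, mk_eq_add_mul_I, e]
      simp only [Complex.real_smul]
      push_cast
      ring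
    obtain ⟨h₀, h₁⟩ := Complex.mk.inj key
    field_simp at h₀ h₁
    linarith
  exact ⟨r₀⁻¹ • u, smul_ne_zero (inv_ne_zero hr₀.ne') (exp_ne_zero _), hv', hr ▸ hw'⟩

end PlaneMap

theorem complexify_eq_smul_iff {ι : Type*} (v w v' w' : ι → ℝ) (lam : ℂ) :
    ((fun j => (v' j : ℂ) + I * (w' j : ℂ)) = lam • fun j => (v j : ℂ) + I * (w j : ℂ)) ↔
      v' = planeMap v w (conj lam) ∧ w' = planeMap v w (I * conj lam) := by
  simp only [funext_iff, Pi.smul_apply, smul_eq_mul, Complex.ext_iff, planeMap_apply, Pi.add_apply,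
    ← forall_and]
  refine forall_congr' fun j => ?_
  simp only [add_re, ofReal_re, mul_re, I_re, zero_mul, I_im, ofReal_im, mul_zero, sub_self,
    add_zero, add_im, mul_im, one_mul, zero_add, conj_re, conj_im, neg_mul, mul_neg, sub_neg_eq_add,
    neg_zero]
  constructor <;> rintro ⟨h₁, h₂⟩ <;> constructor <;> linarith

theorem same_oriented_line_iff_complex_line_general (m : ℕ)
    (v w v' w' : Fin m → ℝ)
    (h : LinearIndependent ℝ ![v, w]) :
    (∃ t₀ : ℝ, ∀ s : ℝ, ∃ r : ℝ, 0 < r ∧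
        Real.cos (s + t₀) • v + Real.sin (s + t₀) • w
          = r • (Real.cos s • v' + Real.sin s • w')) ↔
      (∃ lam : ℂ, lam ≠ 0 ∧
        (fun j => (v' j : ℂ) + Complex.I * (w' j : ℂ))
          = lam • fun j => (v j : ℂ) + Complex.I * (w j : ℂ)) := by
  simp_rw [complexify_eq_smul_iff]
  constructor
  · intro H
    obtain ⟨μ, hμ, hv', hw'⟩ := exists_eq_planeMap_of_shift h H
    exact ⟨conj μ, (map_ne_zero _).mpr hμ, by rwa [conj_conj], by rwa [conj_conj]⟩
  · rintro ⟨lam, hlam, hv', hw'⟩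
    rw [hv', hw']
    exact exists_shift_of_eq_planeMap ((map_ne_zero _).mpr hlam)

/-- **Unit-speed parametrized lines in the space of rays and points of `ℂℙ^{m-1} ∖ ℝℙ^{m-1}`.**
For linearly independent pairs `(v, w)` and `(v', w')` in `ℝᵐ` (`m ≥ 2`), the curves
`γ_{(v,w)}` and `γ_{(v',w')}` parametrize the same oriented line with the same speed up to a
parameter shift (i.e. there is `t₀` with `cos (s+t₀) v + sin (s+t₀) w` a positive multiple of
`cos s v' + sin s w'` for all `s`) if and only if `v' + i w' = λ (v + i w)` for some nonzero
complex number `λ`. -/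
theorem same_oriented_line_iff_complex_line (m : ℕ) (hm : 2 ≤ m)
    (v w v' w' : Fin m → ℝ)
    (h : LinearIndependent ℝ ![v, w]) (h' : LinearIndependent ℝ ![v', w']) :
    (∃ t₀ : ℝ, ∀ s : ℝ, ∃ r : ℝ, 0 < r ∧
        Real.cos (s + t₀) • v + Real.sin (s + t₀) • w
          = r • (Real.cos s • v' + Real.sin s • w')) ↔
      (∃ lam : ℂ, lam ≠ 0 ∧
        (fun j => (v' j : ℂ) + Complex.I * (w' j : ℂ))
          = lam • fun j => (v j : ℂ) + Complex.I * (w j : ℂ)) :=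
  same_oriented_line_iff_complex_line_general m v w v' w' h
end

section
/- Let m ≥ 3. Let u ∈ ℂ^m be such that v = Re(u) and w = Im(u) are linearly independent over ℝ, and let H ⊆ ℂ^m be a complex linear subspace of complex dimension m − 1 such that u ∈ H but the complex span of {v, w} is not contained in H. Then there exist vectors e₀, e₁, …, e_{m−1} forming a basis of ℝ^m whose determinant (with respect to the standard basis) equals 1, and a nonzero complex number λ, such that u = λ·(e₀ + i·e_{m−1}) and H is the complex span of {e₀ + i·e_{m−1}, e₁, …, e_{m−2}}. (This realizes every incident pair of a point of ℂℙ^{m−1} ∖ ℝℙ^{m−1} and a hyperplane through it transverse to the fiber of λ as the image of an element of SL(m,ℝ) under the framed incidence map.) -/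
/-!
Let `v = Re u`, `w = Im u` and let `W = H ∩ ℝᵐ` be the real points of `H`. As the kernel of
`ℝᵐ → ℂᵐ ⧸ H ≅ ℝ²`, `W` has real dimension at least `m - 2`. It meets `span ℝ {v, w}` only in
`0`: if `a v + b w ∈ H` with `(a, b) ≠ 0`, subtracting `a u` leaves `(b - a i) w ∈ H`, so `w` and
then `v = u - i w` lie in `H`, against transversality. Hence `ℝᵐ = span {v, w} ⊕ W`, and a basis
`v, e₁, …, e_{m-2}, w` with `eᵢ ∈ W` can be normalised to determinant `1` by rescaling `e₁`.
The vectors `u, e₁, …, e_{m-2}` are `m - 1` complex-independent vectors of `H`, so they span it.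
-/

open Module Submodule

variable {ι : Type*}

noncomputable def Submodule.realPoints (H : Submodule ℂ (ι → ℂ)) : Submodule ℝ (ι → ℝ) :=
  (H.restrictScalars ℝ).comap (LinearMap.compLeft Complex.ofRealAm.toLinearMap ι)

theorem Submodule.mem_realPoints {H : Submodule ℂ (ι → ℂ)} {x : ι → ℝ} :
    x ∈ H.realPoints ↔ (fun j => (x j : ℂ)) ∈ H :=
  Iff.rfl

theorem Submodule.two_mul_finrank_le_finrank_realPoints_add_card [Fintype ι]
    (H : Submodule ℂ (ι → ℂ)) :
    2 * finrank ℂ H ≤ finrank ℝ H.realPoints + Fintype.card ι := by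
  let f := (H.mkQ.restrictScalars ℝ).comp (LinearMap.compLeft Complex.ofRealAm.toLinearMap ι)
  have hker : LinearMap.ker f = H.realPoints := by
    ext x
    simp only [f, LinearMap.mem_ker, LinearMap.coe_comp, Function.comp_apply,
      LinearMap.coe_restrictScalars, mkQ_apply, Quotient.mk_eq_zero]
    rfl
  have hrank := LinearMap.finrank_range_add_finrank_ker f
  rw [hker, finrank_fintype_fun_eq_card] at hrank
  have hquot := H.finrank_quotient_add_finrank
  rw [finrank_fintype_fun_eq_card] at hquot
  have hreal := finrank_mul_finrank ℝ ℂ ((ι → ℂ) ⧸ H)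
  rw [Complex.finrank_real_complex] at hreal
  have hrange := (LinearMap.range f).finrank_le
  omega

theorem Submodule.disjoint_realPoints_span_re_im {H : Submodule ℂ (ι → ℂ)} {u : ι → ℂ}
    (huH : u ∈ H)
    (htrans : ¬ span ℂ {fun j => ((u j).re : ℂ), fun j => ((u j).im : ℂ)} ≤ H) :
    Disjoint H.realPoints (span ℝ {fun j => (u j).re, fun j => (u j).im}) := by
  set v : ι → ℂ := fun j => ((u j).re : ℂ)
  set w : ι → ℂ := fun j => ((u j).im : ℂ)
  have hu : u = v + Complex.I • w := by
    funext j
    apply Complex.ext <;> simp [v, w]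
  rw [disjoint_def]
  rintro x hxH hx
  obtain ⟨a, b, rfl⟩ := mem_span_pair.1 hx
  have hw : ((b : ℂ) - a * Complex.I) • w ∈ H := by
    have hdiff : ((b : ℂ) - a * Complex.I) • w
        = (fun j => ((a • (fun j => (u j).re) + b • fun j => (u j).im) j : ℂ)) - (a : ℂ) • u := by
      funext j
      apply Complex.ext <;> simp [w]
    rw [hdiff]
    exact H.sub_mem (mem_realPoints.1 hxH) (H.smul_mem _ huH)
  by_cases hc : (b : ℂ) - a * Complex.I = 0
  · have ha : a = 0 := by simpa using congrArg Complex.im hc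
    have hb : b = 0 := by simpa using congrArg Complex.re hc
    simp [ha, hb]
  · have hwH : w ∈ H := (H.smul_mem_iff hc).1 hw
    have hvH : v ∈ H := by
      have : u - Complex.I • w ∈ H := H.sub_mem huH (H.smul_mem _ hwH)
      rwa [hu, add_sub_cancel_right] at this
    exact absurd (span_le.2 (Set.insert_subset hvH (Set.singleton_subset_iff.2 hwH))) htrans

theorem Matrix.det_updateRow_inv_det_smul {K : Type*} [Field K] [Fintype ι] [DecidableEq ι]
    (A : Matrix ι ι K) (hA : A.det ≠ 0) (c : ι) :
    (A.updateRow c (A.det⁻¹ • A c)).det = 1 := by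
  rw [Matrix.det_updateRow_smul, Matrix.updateRow_eq_self, inv_mul_cancel₀ hA]

section Frame

variable {K : Type*} [Field K] [Fintype ι] [DecidableEq ι] {a b : ι}

theorem exists_linearIndependent_extend_pair {M : Type*} [AddCommGroup M] [Module K M]
    [FiniteDimensional K M] {v w : M} {W : Submodule K M} (hM : finrank K M = Fintype.card ι) (hab : a ≠ b)
    (hvw : LinearIndependent K ![v, w]) (hW : Disjoint W (span K {v, w}))
    (hdim : Fintype.card ι ≤ finrank K W + 2) :
    ∃ e : ι → M, LinearIndependent K e ∧ e a = v ∧ e b = w ∧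
      ∀ i, i ≠ a → i ≠ b → e i ∈ W := by
  have hV : finrank K (span K {v, w}) = 2 := by
    have h := finrank_span_eq_card hvw
    rwa [Matrix.range_cons, Matrix.range_cons, Matrix.range_empty, Set.union_empty,
      Set.singleton_union, Fintype.card_fin] at h
  have hsup := finrank_sup_add_finrank_inf_eq W (span K {v, w})
  rw [hW.eq_bot, finrank_bot, hV] at hsup
  have hsup_le := (W ⊔ span K {v, w}).finrank_le
  have hcard : Fintype.card {i // i ≠ a ∧ i ≠ b} = Fintype.card ι - 2 := by
    have hfilter : Finset.univ.filter (fun i => i ≠ a ∧ i ≠ b) = Finset.univ \ {a, b} := by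
      ext
      simp
    rw [Fintype.card_subtype, hfilter, Finset.card_sdiff_of_subset (Finset.subset_univ _),
      Finset.card_pair hab, Finset.card_univ]
  have htop : W ⊔ span K {v, w} = ⊤ := eq_top_of_finrank_eq (by omega)
  let q : Basis {i // i ≠ a ∧ i ≠ b} K W :=
    (finBasis K W).reindex (Fintype.equivOfCardEq (by simp only [Fintype.card_fin]; omega))
  let e : ι → M := fun i => if h : i ≠ a ∧ i ≠ b then (q ⟨i, h⟩ : M) else if i = a then v else w
  have hWe : W ≤ span K (Set.range e) := by
    rw [← W.map_subtype_top, ← q.span_eq, ← span_image, ← Set.range_comp]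
    refine span_mono ?_
    rintro _ ⟨i, rfl⟩
    exact ⟨i, dif_pos i.2⟩
  have hVe : span K {v, w} ≤ span K (Set.range e) :=
    span_le.2 (Set.insert_subset (subset_span ⟨a, by simp [e]⟩)
      (Set.singleton_subset_iff.2 (subset_span ⟨b, by simp [e, hab.symm]⟩)))
  refine ⟨e, linearIndependent_of_top_le_span_of_card_eq_finrank ?_ hM.symm,
    by simp [e], by simp [e, hab.symm], fun i ha hb => by simp [e, ha, hb]⟩
  rw [← htop]
  exact sup_le hWe hVe

theorem exists_det_eq_one_extend_pair {c : ι} {v w : ι → K} {W : Submodule K (ι → K)}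
    (hab : a ≠ b) (hca : c ≠ a) (hcb : c ≠ b) (hvw : LinearIndependent K ![v, w])
    (hW : Disjoint W (span K {v, w})) (hdim : Fintype.card ι ≤ finrank K W + 2) :
    ∃ e : ι → ι → K, (Matrix.of e).det = 1 ∧ e a = v ∧ e b = w ∧
      ∀ i, i ≠ a → i ≠ b → e i ∈ W := by
  obtain ⟨e, he, hea, heb, hmid⟩ :=
    exists_linearIndependent_extend_pair (finrank_fintype_fun_eq_card K) hab hvw hW hdim
  set A := Matrix.of e
  have hA : A.det ≠ 0 :=
    ((Matrix.isUnit_iff_isUnit_det A).1 (Matrix.linearIndependent_rows_iff_isUnit.1 he)).ne_zero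
  refine ⟨A.updateRow c (A.det⁻¹ • A c), A.det_updateRow_inv_det_smul hA c,
    by rw [Matrix.updateRow_ne hca.symm]; exact hea,
    by rw [Matrix.updateRow_ne hcb.symm]; exact heb, fun i ha hb => ?_⟩
  by_cases hic : i = c
  · subst hic
    rw [Matrix.updateRow_self]
    exact W.smul_mem _ (hmid i ha hb)
  · rw [Matrix.updateRow_ne hic]
    exact hmid i ha hb

end Frame

theorem Submodule.eq_span_insert_add_smul_of_det_ne_zero {L : Type*} [Field L] [Fintype ι]
    [DecidableEq ι] {H : Submodule L (ι → L)} (hdim : finrank L H + 1 = Fintype.card ι) {E : Matrix ι ι L}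
    (hE : E.det ≠ 0) {a b : ι} (hab : a ≠ b) (t : L) (haH : E a + t • E b ∈ H)
    (hmid : ∀ i, i ≠ a → i ≠ b → E i ∈ H) :
    H = span L (insert (E a + t • E b) (E '' {i | i ≠ a ∧ i ≠ b})) := by
  set A := E.updateRow a (E a + t • E b)
  have hA : A.det ≠ 0 := by rwa [Matrix.det_updateRow_add_smul_self _ hab]
  have hind : LinearIndependent L fun i : {i // i ≠ b} => A i :=
    (Matrix.linearIndependent_rows_of_det_ne_zero hA).comp _ Subtype.val_injective
  have hrange : Set.range (fun i : {i // i ≠ b} => A i)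
      = insert (E a + t • E b) (E '' {i | i ≠ a ∧ i ≠ b}) := by
    ext x
    constructor
    · rintro ⟨⟨i, hib⟩, rfl⟩
      by_cases hia : i = a
      · subst hia
        exact Or.inl Matrix.updateRow_self
      · exact Or.inr ⟨i, ⟨hia, hib⟩, (Matrix.updateRow_ne hia).symm⟩
    · rintro (rfl | ⟨i, ⟨hia, hib⟩, rfl⟩)
      · exact ⟨⟨a, hab⟩, Matrix.updateRow_self⟩
      · exact ⟨⟨i, hib⟩, Matrix.updateRow_ne hia⟩
  rw [← hrange]
  refine (eq_of_le_of_finrank_eq ?_ ?_).symm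
  · rw [span_le, hrange]
    rintro _ (rfl | ⟨i, ⟨hia, hib⟩, rfl⟩)
    exacts [haH, hmid i hia hib]
  · rw [finrank_span_eq_card hind, Fintype.card_subtype_compl, Fintype.card_subtype_eq]
    omega

/-- **Surjectivity of the framed incidence map.**
Let `m ≥ 3`, let `u ∈ ℂᵐ` have linearly independent real and imaginary parts, and let `H`
be a complex hyperplane (complex codimension one subspace) containing `u` but not containing
the complex span of `{Re u, Im u}`.  Then there is a real basis `e₀, …, e_{m-1}` of `ℝᵐ` of
determinant `1` and a nonzero `λ ∈ ℂ` with `u = λ (e₀ + i e_{m-1})` and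
`H = spanℂ {e₀ + i e_{m-1}, e₁, …, e_{m-2}}`. -/
theorem framed_incidence_surjective (m : ℕ) (hm : 3 ≤ m) (u : Fin m → ℂ)
    (hind : LinearIndependent ℝ ![fun j => (u j).re, fun j => (u j).im])
    (H : Submodule ℂ (Fin m → ℂ)) (hdim : Module.finrank ℂ H = m - 1)
    (huH : u ∈ H)
    (htrans : ¬ (Submodule.span ℂ
        ({fun j => ((u j).re : ℂ), fun j => ((u j).im : ℂ)} : Set (Fin m → ℂ)) ≤ H)) :
    ∃ (e : Fin m → Fin m → ℝ) (lam : ℂ), lam ≠ 0 ∧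
      (Matrix.of e).det = 1 ∧
      u = lam • (fun j => (e ⟨0, by omega⟩ j : ℂ) + Complex.I * (e ⟨m - 1, by omega⟩ j : ℂ)) ∧
      H = Submodule.span ℂ
        (insert (fun j => (e ⟨0, by omega⟩ j : ℂ) + Complex.I * (e ⟨m - 1, by omega⟩ j : ℂ))
          ((fun i => fun j => (e i j : ℂ)) '' {i : Fin m | 1 ≤ (i : ℕ) ∧ (i : ℕ) ≤ m - 2})) := by
  set a : Fin m := ⟨0, by omega⟩
  set b : Fin m := ⟨m - 1, by omega⟩
  have hab : a ≠ b := by simp [a, b, Fin.ext_iff]; omega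
  have hca : (⟨1, by omega⟩ : Fin m) ≠ a := by simp [a, Fin.ext_iff]
  have hcb : (⟨1, by omega⟩ : Fin m) ≠ b := by simp [b, Fin.ext_iff]; omega
  have hW : Fintype.card (Fin m) ≤ finrank ℝ H.realPoints + 2 := by
    have := H.two_mul_finrank_le_finrank_realPoints_add_card
    simp only [Fintype.card_fin] at this ⊢
    omega
  obtain ⟨e, hdet, hea, heb, hmid⟩ := exists_det_eq_one_extend_pair hab hca hcb hind
    (disjoint_realPoints_span_re_im huH htrans) hW
  let E : Matrix (Fin m) (Fin m) ℂ := fun i j => (e i j : ℂ)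
  have hu : u = E a + Complex.I • E b := by
    funext j
    apply Complex.ext <;> simp [E, hea, heb]
  have hE : E.det = 1 := by
    rw [← map_one Complex.ofRealHom, ← hdet, RingHom.map_det]
    rfl
  have hmiddle : {i : Fin m | 1 ≤ (i : ℕ) ∧ (i : ℕ) ≤ m - 2} = {i | i ≠ a ∧ i ≠ b} := by
    ext i
    simp only [Set.mem_ofPred_eq, ne_eq, a, b, Fin.ext_iff]
    omega
  have hspan := eq_span_insert_add_smul_of_det_ne_zero (by rw [hdim, Fintype.card_fin]; omega)
    (hE ▸ one_ne_zero) hab Complex.I (hu ▸ huH) fun i ha hb => mem_realPoints.1 (hmid i ha hb)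
  refine ⟨e, 1, one_ne_zero, hdet, by rw [one_smul]; exact hu, ?_⟩
  rwa [hmiddle]
end

section
/- Let n ≥ 2. Suppose B : ℂⁿ × ℂⁿ → ℂⁿ is ℝ-bilinear and symmetric (B(x,y) = B(y,x) for all x, y), and suppose that for every x ∈ ℂⁿ there exists a matrix X(x) ∈ 𝔤ₙ such that B(x, y) = X(x)·y (matrix–vector multiplication) for all y ∈ ℂⁿ. Then B = 0. That is, the first prolongation of the Lie algebra 𝔤ₙ of S¹·GL(n,ℝ) ⊂ GL(2n,ℝ) vanishes when n > 1. -/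
/-- The Lie algebra `𝔤ₙ` of `S¹·GL(n,ℝ) ⊂ GL(n,ℂ) ⊂ GL(2n,ℝ)`, realized as the set of
complex `n × n` matrices of the form `M + i t Iₙ` with `M` real and `t ∈ ℝ`. -/
def gLieAlg (n : ℕ) : Set (Matrix (Fin n) (Fin n) ℂ) :=
  {X | ∃ (M : Matrix (Fin n) (Fin n) ℝ) (t : ℝ),
    X = M.map (fun a => (a : ℂ)) + ((t : ℂ) * Complex.I) • (1 : Matrix (Fin n) (Fin n) ℂ)}

/-- **The first prolongation of `𝔤ₙ` vanishes for `n ≥ 2`.**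
If `B : ℂⁿ × ℂⁿ → ℂⁿ` is a symmetric `ℝ`-bilinear map such that for each `x` the map
`y ↦ B x y` is given by the action of a matrix in `𝔤ₙ`, then `B = 0`. -/
theorem first_prolongation_vanishes (n : ℕ) (hn : 2 ≤ n)
    (B : (Fin n → ℂ) → (Fin n → ℂ) → (Fin n → ℂ))
    (hsymm : ∀ x y, B x y = B y x)
    (hadd : ∀ x x' y, B (x + x') y = B x y + B x' y)
    (hsmul : ∀ (r : ℝ) (x y), B (r • x) y = r • B x y)
    (hG : ∀ x, ∃ X ∈ gLieAlg n, ∀ y, B x y = X.mulVec y) :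
    B = 0 := by
  haveI : Nontrivial (Fin n) := Fin.nontrivial_iff_two_le.mpr hn
  choose X hX hB using hG
  choose M t hMt using hX
  set e : Fin n → (Fin n → ℂ) := fun j => Pi.single j 1 with he
  -- entrywise formula for `B x (e k)`
  have key : ∀ x k l, B x (e k) l
      = (M x l k : ℂ) + (t x : ℂ) * Complex.I * (if l = k then 1 else 0) := by
    intro x k l
    rw [hB, hMt]
    simp [Matrix.add_mulVec, Matrix.smul_mulVec, Matrix.one_mulVec, he,
      Matrix.mulVec_single, Pi.single_apply, Matrix.one_apply, mul_ite, mul_comm]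
  have key2 : ∀ x k l, B x (Complex.I • e k) l = Complex.I * B x (e k) l := by
    intro x k l
    rw [hB, hB, Matrix.mulVec_smul]
    simp
  -- t (e j) = 0
  have ht : ∀ j, t (e j) = 0 := by
    intro j
    obtain ⟨k, hk⟩ := exists_ne j
    have h := congrFun (hsymm (e j) (e k)) k
    rw [key, key] at h
    simp only [if_pos rfl, if_neg hk, mul_one, mul_zero, add_zero] at h
    have := congrArg Complex.im h
    simpa using this
  -- M (I • e j) = 0  and  t (I • e j) * δ_{lk} = M (e k) l j
  have hIm : ∀ j k l, M (Complex.I • e j) l k = 0 ∧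
      (t (Complex.I • e j) : ℝ) * (if l = k then 1 else 0) = M (e k) l j := by
    intro j k l
    have h := congrFun (hsymm (Complex.I • e j) (e k)) l
    rw [key, key2, key, ht k] at h
    push_cast at h
    rw [Complex.ext_iff] at h
    constructor
    · have := h.1
      simp at this
      split_ifs at this with hlk <;> simpa [hlk] using this
    · have := h.2
      simp at this
      split_ifs at this with hlk <;> simpa [hlk] using this
  -- t (I • e j) = 0
  have hts : ∀ j, t (Complex.I • e j) = 0 := by
    intro j
    obtain ⟨k, hk⟩ := exists_ne j
    have h := congrFun (hsymm (Complex.I • e j) (Complex.I • e k)) k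
    rw [key2, key2, key, key, (hIm j k k).1, (hIm k j k).1] at h
    simp only [if_pos rfl, if_neg hk, mul_one, mul_zero, add_zero, zero_add,
      Complex.ofReal_zero] at h
    have := congrArg Complex.re h
    simpa [Complex.I_mul_im, Complex.I_mul_re] using this
  -- hence M (e k) = 0 for all k
  have hMe : ∀ k l j, M (e k) l j = 0 := by
    intro k l j
    have := (hIm j k l).2
    rw [hts j] at this
    simpa using this.symm
  -- hence B (e k) y = 0 for all k, y
  have hBe : ∀ k y, B (e k) y = 0 := by
    intro k y
    rw [hB, hMt]
    have h1 : M (e k) = 0 := by ext l j; exact hMe k l j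
    rw [h1, ht k]
    simp
  -- X x = 0 for every x
  funext x y
  have hXx : X x = 0 := by
    ext l k
    have h := congrFun ((hsymm x (e k)).trans (hBe k x)) l
    rw [hB] at h
    simpa [he, Matrix.mulVec_single] using h
  rw [hB, hXx]
  simp
end

section
/- Let n ≥ 1 and let U ⊆ ℂⁿ be a real linear subspace (ℂⁿ viewed as a real vector space of dimension 2n) such that (1) for every θ ∈ ℝ and x ∈ U one has e^{iθ}·x ∈ U, and (2) for every invertible real n×n matrix M and every x ∈ U one has M·x ∈ U (matrix–vector multiplication using the complexification of M). Then U = {0} or U = ℂⁿ. That is, the subgroup S¹·GL(n,ℝ) ⊂ GL(2n,ℝ) acts irreducibly on ℝ²ⁿ. -/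
/-!
Rotating by `e^{iπ/2} = i` makes `U` a complex subspace. Every real matrix `M` is the
difference `t • 1 - (t • 1 - M)` of two invertible ones (take `t ≠ 0` outside the spectrum of
`M`), so `U` is stable under all real matrices, in particular under the matrix units `E_{kj}`.
If `x ∈ U` has `x j ≠ 0`, then `E_{kj} x = x j • e_k`, so `U` contains every `e_k`.
-/

open Complex Matrix

theorem Matrix.exists_isUnit_det_sub_eq {K ι : Type*} [Field K] [Infinite K] [Fintype ι]
    [DecidableEq ι] (M : Matrix ι ι K) :
    ∃ A B : Matrix ι ι K, IsUnit A.det ∧ IsUnit B.det ∧ A - B = M := by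
  obtain ⟨t, ht⟩ := ((M.finite_spectrum.union (Set.finite_singleton 0)).infinite_compl).nonempty
  simp only [Set.mem_compl_iff, Set.mem_union, Set.mem_singleton_iff, not_or] at ht
  obtain ⟨ht_spec, ht0⟩ := ht
  refine ⟨algebraMap K _ t, algebraMap K _ t - M, ?_, ?_, sub_sub_cancel _ _⟩
  · rw [Algebra.algebraMap_eq_smul_one, det_smul, det_one, mul_one]
    exact (isUnit_iff_ne_zero.mpr ht0).pow _
  · exact (isUnit_iff_isUnit_det _).mp (spectrum.notMem_iff.mp ht_spec)

theorem Submodule.exists_restrictScalars_eq_of_I_smul_mem {V : Type*} [AddCommGroup V]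
    [Module ℂ V] [Module ℝ V] [IsScalarTower ℝ ℂ V] (U : Submodule ℝ V)
    (hI : ∀ x ∈ U, I • x ∈ U) : ∃ W : Submodule ℂ V, W.restrictScalars ℝ = U := by
  refine ⟨{ U with smul_mem' := fun c x hx => ?_ }, rfl⟩
  have hc : c • x = c.re • x + c.im • I • x := by
    conv_lhs => rw [← re_add_im c]
    rw [add_smul, mul_smul, ← algebraMap_smul ℂ c.re, ← algebraMap_smul ℂ c.im]
    rfl
  rw [hc]
  exact U.add_mem (U.smul_mem _ hx) (U.smul_mem _ (hI x hx))

theorem Submodule.eq_bot_or_eq_top_of_single_mulVec_mem {L ι : Type*} [Field L] [Fintype ι]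
    [DecidableEq ι] (W : Submodule L (ι → L))
    (hW : ∀ i j, ∀ x ∈ W, single i j (1 : L) *ᵥ x ∈ W) : W = ⊥ ∨ W = ⊤ := by
  refine or_iff_not_imp_left.mpr fun hW_ne => ?_
  obtain ⟨x, hxW, hx0⟩ := W.exists_mem_ne_zero_of_ne_bot hW_ne
  obtain ⟨j, hj⟩ := Function.ne_iff.mp hx0
  have h_single : ∀ k, Pi.single k 1 ∈ W := fun k => by
    have hk : (x j)⁻¹ • (single k j (1 : L) *ᵥ x) = Pi.single k 1 := by
      rw [single_mulVec, one_mul]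
      change (x j)⁻¹ • Pi.single k (x j) = _
      rw [← Pi.single_smul', smul_eq_mul, inv_mul_cancel₀ hj]
    exact hk ▸ W.smul_mem _ (hW k j x hxW)
  rw [eq_top_iff, ← (Pi.basisFun L ι).span_eq, span_le]
  rintro _ ⟨k, rfl⟩
  simpa using h_single k

theorem s1_gln_irreducible_general (n : ℕ) (U : Submodule ℝ (Fin n → ℂ))
    (hrot : ∀ (θ : ℝ), ∀ x ∈ U, Complex.exp ((θ : ℂ) * Complex.I) • x ∈ U)
    (hmat : ∀ M : Matrix (Fin n) (Fin n) ℝ, IsUnit M.det →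
      ∀ x ∈ U, (M.map (fun a => (a : ℂ))).mulVec x ∈ U) :
    U = ⊥ ∨ U = ⊤ := by
  have hI : ∀ x ∈ U, I • x ∈ U := fun x hx => by
    simpa [exp_pi_div_two_mul_I] using hrot (Real.pi / 2) x hx
  have h_all : ∀ M : Matrix (Fin n) (Fin n) ℝ, ∀ x ∈ U, (M.map (fun a => (a : ℂ))) *ᵥ x ∈ U := by
    intro M x hx
    obtain ⟨A, B, hA, hB, rfl⟩ := M.exists_isUnit_det_sub_eq
    rw [Matrix.map_sub _ (fun a b => ofReal_sub a b), sub_mulVec]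
    exact U.sub_mem (hmat A hA x hx) (hmat B hB x hx)
  obtain ⟨W, rfl⟩ := U.exists_restrictScalars_eq_of_I_smul_mem hI
  simp only [Submodule.restrictScalars_eq_bot_iff, Submodule.restrictScalars_eq_top_iff]
  have h_unit : ∀ i j : Fin n, (single i j (1 : ℝ)).map (fun a => (a : ℂ)) = single i j 1 :=
    fun i j => by rw [← ofReal_one]; exact map_single i j (1 : ℝ) ofRealHom
  exact W.eq_bot_or_eq_top_of_single_mulVec_mem fun i j x hx => h_unit i j ▸ h_all _ x hx

/-- **`S¹·GL(n,ℝ)` acts irreducibly on `ℝ²ⁿ ≅ ℂⁿ`.**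
If a real subspace `U ⊆ ℂⁿ` is stable under multiplication by all unit complex scalars
`e^{iθ}` and under the (complexified) action of every invertible real `n × n` matrix,
then `U = 0` or `U = ℂⁿ`. -/
theorem s1_gln_irreducible (n : ℕ) (hn : 1 ≤ n) (U : Submodule ℝ (Fin n → ℂ))
    (hrot : ∀ (θ : ℝ), ∀ x ∈ U, Complex.exp ((θ : ℂ) * Complex.I) • x ∈ U)
    (hmat : ∀ M : Matrix (Fin n) (Fin n) ℝ, IsUnit M.det →
      ∀ x ∈ U, (M.map (fun a => (a : ℂ))).mulVec x ∈ U) :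
    U = ⊥ ∨ U = ⊤ :=
  s1_gln_irreducible_general n U hrot hmat
end

section
/- Let n ≥ 3 and let R ∈ K(𝔤ₙ), that is, R : ℂⁿ × ℂⁿ → 𝔤ₙ is ℝ-bilinear and alternating and satisfies R(x,y)·z + R(y,z)·x + R(z,x)·y = 0 for all x, y, z ∈ ℂⁿ. Then R is of type (1,1): R(i·x, i·y) = R(x, y) for all x, y ∈ ℂⁿ. -/
lemma exists_third {n : ℕ} (hn : 3 ≤ n) (p q : Fin n) : ∃ r : Fin n, r ≠ p ∧ r ≠ q := by
  by_contra h
  push_neg at h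
  have hsub : (Finset.univ : Finset (Fin n)) ⊆ {p, q} := by
    intro r _
    rcases eq_or_ne r p with h1 | h1
    · simp [h1]
    · simp [h r h1]
  have := Finset.card_le_card hsub
  have h2 : ({p, q} : Finset (Fin n)).card ≤ 2 := by
    apply le_trans (Finset.card_insert_le _ _)
    simp
  simp [Finset.card_univ] at this
  omega

/-- **Curvature tensors of `𝔤ₙ` are of type (1,1) for `n ≥ 3`.**
If `R : ℂⁿ × ℂⁿ → 𝔤ₙ` is an alternating `ℝ`-bilinear map satisfying the first Bianchi
identity, then `R (i x) (i y) = R x y` for all `x, y ∈ ℂⁿ`. -/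
theorem curvature_tensor_type_one_one (n : ℕ) (hn : 3 ≤ n)
    (R : (Fin n → ℂ) →ₗ[ℝ] (Fin n → ℂ) →ₗ[ℝ] Matrix (Fin n) (Fin n) ℂ)
    (halt : ∀ x y, R x y = - R y x)
    (hG : ∀ x y, R x y ∈ gLieAlg n)
    (hBianchi : ∀ x y z,
      (R x y).mulVec z + (R y z).mulVec x + (R z x).mulVec y = 0) :
    ∀ x y, R (Complex.I • x) (Complex.I • y) = R x y := by
  classical
  haveI : NeZero n := ⟨by omega⟩
  -- notation
  set E : Fin n → (Fin n → ℂ) := fun p => Pi.single p 1 with hEdef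
  set F : Fin n → (Fin n → ℂ) := fun p => Complex.I • (Pi.single p 1 : Fin n → ℂ) with hFdef
  -- structural facts coming from membership in 𝔤ₙ
  have him : ∀ x y, ∀ j k : Fin n, j ≠ k → (R x y j k).im = 0 := by
    intro x y j k hjk
    obtain ⟨M, t, hMt⟩ := hG x y
    rw [hMt]
    simp [Matrix.add_apply, Matrix.map_apply, Matrix.smul_apply, Matrix.one_apply, hjk]
  have hdiag : ∀ x y, ∀ j k : Fin n, (R x y j j).im = (R x y k k).im := by
    intro x y j k
    obtain ⟨M, t, hMt⟩ := hG x y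
    rw [hMt]
    simp [Matrix.add_apply, Matrix.map_apply, Matrix.smul_apply, Matrix.one_apply]
  -- alternating : R x x = 0
  have hzero : ∀ x, R x x = 0 := by
    intro x
    have h := halt x x
    ext j k
    have h2 : R x x j k = (-(R x x)) j k := by rw [← h]
    rw [Matrix.neg_apply] at h2
    have : R x x j k = 0 := by linear_combination h2 / 2
    simpa using this
  -- Bianchi, componentwise
  have hB : ∀ x y z (j : Fin n),
      (R x y).mulVec z j + (R y z).mulVec x j + (R z x).mulVec y j = 0 := by
    intro x y z j
    have := congrFun (hBianchi x y z) j
    simpa using this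
  -- matrix-vector products with basis vectors
  have hmE : ∀ (M : Matrix (Fin n) (Fin n) ℂ) (p j : Fin n), M.mulVec (E p) j = M j p := by
    intro M p j
    simp [hEdef, Matrix.mulVec_single]
  have hmF : ∀ (M : Matrix (Fin n) (Fin n) ℂ) (p j : Fin n),
      M.mulVec (F p) j = Complex.I * M j p := by
    intro M p j
    rw [hFdef]
    rw [Matrix.mulVec_smul]
    simp [Matrix.mulVec_single]
  -- Step 1 : the imaginary part of R(Eₚ, E_q) vanishes
  have hXim : ∀ p q j k : Fin n, (R (E p) (E q) j k).im = 0 := by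
    have hXdiag : ∀ p q : Fin n, (R (E p) (E q) 0 0).im = 0 := by
      intro p q
      rcases eq_or_ne p q with h | h
      · rw [h, hzero]; simp
      · obtain ⟨r, hrp, hrq⟩ := exists_third hn p q
        have hb := hB (E p) (E q) (E r) r
        rw [hmE, hmE, hmE] at hb
        have him2 := congrArg Complex.im hb
        rw [Complex.add_im, Complex.add_im, Complex.zero_im,
          him _ _ r p hrp, him _ _ r q hrq] at him2
        rw [hdiag _ _ 0 r]
        linarith
    intro p q j k
    rcases eq_or_ne j k with h | h
    · rw [h, hdiag _ _ k 0, hXdiag]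
    · exact him _ _ j k h
  -- Step 2 : the imaginary part of R(Fₚ, F_q) vanishes
  have hZim : ∀ p q j k : Fin n, (R (F p) (F q) j k).im = 0 := by
    have hZdiag : ∀ p q : Fin n, (R (F p) (F q) 0 0).im = 0 := by
      intro p q
      rcases eq_or_ne p q with h | h
      · rw [h, hzero]; simp
      · obtain ⟨r, hrp, hrq⟩ := exists_third hn p q
        have hb := hB (F p) (F q) (F r) r
        rw [hmF, hmF, hmF] at hb
        have hb2 : R (F p) (F q) r r + R (F q) (F r) r p + R (F r) (F p) r q = 0 := by
          apply mul_left_cancel₀ Complex.I_ne_zero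
          rw [mul_zero]
          linear_combination hb
        have him2 := congrArg Complex.im hb2
        rw [Complex.add_im, Complex.add_im, Complex.zero_im,
          him _ _ r p hrp, him _ _ r q hrq] at him2
        rw [hdiag _ _ 0 r]
        linarith
    intro p q j k
    rcases eq_or_ne j k with h | h
    · rw [h, hdiag _ _ k 0, hZdiag]
    · exact him _ _ j k h
  -- the imaginary part of R(Eₚ, F_q)
  have hYim : ∀ p q j k : Fin n, (R (E p) (F q) j k).im =
      if j = k then (R (E p) (F q) 0 0).im else 0 := by
    intro p q j k
    rcases eq_or_ne j k with h | h
    · rw [h, if_pos rfl, hdiag _ _ k 0]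
    · rw [if_neg h, him _ _ j k h]
  -- the key mixed Bianchi identity (two real, one imaginary argument)
  have hS2 : ∀ p q r j : Fin n, Complex.I * R (E p) (E q) j r
      + R (E q) (F r) j p - R (E p) (F r) j q = 0 := by
    intro p q r j
    have hb := hB (E p) (E q) (F r) j
    rw [hmF, hmE, hmE, halt (F r) (E p), Matrix.neg_apply] at hb
    linear_combination hb
  -- real part of hS2 : a symmetry of the real parts of Y
  have hS1 : ∀ p q r j : Fin n, (R (E q) (F r) j p).re = (R (E p) (F r) j q).re := by
    intro p q r j
    have := congrArg Complex.re (hS2 p q r j)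
    rw [Complex.sub_re, Complex.add_re, Complex.zero_re, Complex.mul_re,
      Complex.I_re, Complex.I_im, hXim] at this
    simp at this
    linarith
  -- imaginary part of hS2 : formula for the real part of X = R(Eₚ, E_q)
  have hXre : ∀ p q j k : Fin n, (R (E p) (E q) j k).re =
      (if j = q then (R (E p) (F k) 0 0).im else 0)
      - (if j = p then (R (E q) (F k) 0 0).im else 0) := by
    intro p q j k
    have := congrArg Complex.im (hS2 p q k j)
    rw [Complex.sub_im, Complex.add_im, Complex.zero_im, Complex.mul_im,
      Complex.I_re, Complex.I_im, hXim, hYim q k j p, hYim p k j q] at this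
    simp at this
    linarith
  -- symmetry of the 𝔦-trace form
  have hsym : ∀ p q : Fin n, (R (E p) (F q) 0 0).im = (R (E q) (F p) 0 0).im := by
    intro p q
    rcases eq_or_ne p q with h | h
    · rw [h]
    · obtain ⟨r, hrp, hrq⟩ := exists_third hn p q
      have hb := hB (E p) (E q) (E r) r
      rw [hmE, hmE, hmE] at hb
      have hre := congrArg Complex.re hb
      rw [Complex.add_re, Complex.add_re, Complex.zero_re,
        hXre p q r r, hXre q r r p, hXre r p r q] at hre
      rw [if_neg hrq, if_neg hrp, if_pos rfl, if_neg hrq, if_neg hrp, if_pos rfl] at hre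
      linarith
  -- the mixed Bianchi identity (one real, two imaginary arguments)
  have hS3 : ∀ p q r j : Fin n, Complex.I * R (E p) (F q) j r
      + R (F q) (F r) j p - Complex.I * R (E p) (F r) j q = 0 := by
    intro p q r j
    have hb := hB (E p) (F q) (F r) j
    rw [hmF, hmE, hmF, halt (F r) (E p), Matrix.neg_apply] at hb
    linear_combination hb
  -- real part of hS3 : formula for the real part of Z = R(Fₚ, F_q)
  have hZre : ∀ p q j k : Fin n, (R (F p) (F q) j k).re =
      (if j = q then (R (E k) (F p) 0 0).im else 0)
      - (if j = p then (R (E k) (F q) 0 0).im else 0) := by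
    intro p q j k
    have := congrArg Complex.re (hS3 k p q j)
    rw [Complex.sub_re, Complex.add_re, Complex.zero_re, Complex.mul_re, Complex.mul_re,
      Complex.I_re, Complex.I_im, hYim k p j q, hYim k q j p] at this
    simp at this
    linarith
  -- imaginary part of hS3 : a symmetry of the real parts of Y
  have hS4 : ∀ p q r j : Fin n, (R (E p) (F q) j r).re = (R (E p) (F r) j q).re := by
    intro p q r j
    have := congrArg Complex.im (hS3 p q r j)
    rw [Complex.sub_im, Complex.add_im, Complex.zero_im, Complex.mul_im, Complex.mul_im,
      Complex.I_re, Complex.I_im, hZim] at this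
    simp at this
    linarith
  -- main identity on basis vectors : type (1,1) part
  have hL1 : ∀ p q : Fin n, R (F p) (F q) = R (E p) (E q) := by
    intro p q
    ext j k
    apply Complex.ext
    · rw [hZre, hXre, hsym k p, hsym k q]
    · rw [hZim, hXim]
  -- main identity on basis vectors : mixed terms
  have hL2 : ∀ p q : Fin n, R (E p) (F q) = R (E q) (F p) := by
    intro p q
    ext j k
    apply Complex.ext
    · calc (R (E p) (F q) j k).re = (R (E p) (F k) j q).re := hS4 p q k j
        _ = (R (E q) (F k) j p).re := hS1 q p k j
        _ = (R (E q) (F p) j k).re := (hS4 q p k j).symm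
    · rw [hYim p q j k, hYim q p j k, hsym p q]
  -- now assemble : reduce to basis vectors
  have hFsingle : ∀ p : Fin n, F p = Pi.single p Complex.I := by
    intro p
    funext j
    rcases eq_or_ne j p with h | h
    · subst h; simp [hFdef]
    · simp [hFdef, Pi.single_apply, h]
  have hJJ : ∀ x : Fin n → ℂ, Complex.I • (Complex.I • x) = -x := by
    intro x
    rw [smul_smul, Complex.I_mul_I]
    exact neg_one_smul ℂ x
  have hJF : ∀ p : Fin n, Complex.I • F p = -(E p) := by
    intro p
    rw [hFdef, hEdef]
    exact hJJ _
  have hFE : ∀ p : Fin n, Complex.I • E p = F p := by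
    intro p; rw [hEdef, hFdef]
  have hcase : ∀ u v : Fin n → ℂ,
      ((∃ p, u = E p) ∨ (∃ p, u = F p)) → ((∃ q, v = E q) ∨ (∃ q, v = F q)) →
      R (Complex.I • u) (Complex.I • v) = R u v := by
    rintro u v (⟨p, rfl⟩ | ⟨p, rfl⟩) (⟨q, rfl⟩ | ⟨q, rfl⟩)
    · rw [hFE, hFE]
      exact hL1 p q
    · rw [hFE, hJF q, map_neg, halt (F p) (E q), neg_neg, hL2 p q]
    · rw [hFE, hJF p, LinearMap.map_neg₂, hL2 p q, halt (F p) (E q)]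
    · rw [hJF p, hJF q, LinearMap.map_neg₂, map_neg, neg_neg]
      exact (hL1 p q).symm
  intro x y
  let J : (Fin n → ℂ) →ₗ[ℝ] (Fin n → ℂ) :=
    { toFun := fun v => Complex.I • v
      map_add' := fun a b => smul_add _ a b
      map_smul' := fun c a => (smul_comm c Complex.I a).symm }
  have hJv : ∀ v : Fin n → ℂ, J v = Complex.I • v := fun _ => rfl
  have hkey : LinearMap.compl₁₂ R J J = R := by
    let b : Module.Basis (Σ _ : Fin n, Fin 2) ℝ (Fin n → ℂ) :=
      Pi.basis fun _ => Complex.basisOneI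
    have hb0 : ∀ p : Fin n, b ⟨p, 0⟩ = E p := by
      intro p
      rw [hEdef]
      simp [b, Pi.basis_apply]
    have hb1 : ∀ p : Fin n, b ⟨p, 1⟩ = F p := by
      intro p
      rw [hFsingle]
      simp [b, Pi.basis_apply]
    apply LinearMap.ext_basis b b
    rintro ⟨p, s⟩ ⟨q, u⟩
    rw [LinearMap.compl₁₂_apply, hJv, hJv]
    apply hcase
    · fin_cases s
      · exact Or.inl ⟨p, hb0 p⟩
      · exact Or.inr ⟨p, hb1 p⟩
    · fin_cases u
      · exact Or.inl ⟨q, hb0 q⟩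
      · exact Or.inr ⟨q, hb1 q⟩
  calc R (Complex.I • x) (Complex.I • y) = (LinearMap.compl₁₂ R J J) x y := by
        rw [LinearMap.compl₁₂_apply, hJv, hJv]
    _ = R x y := by rw [hkey]
end

section
/- Let n ≥ 3 and let R ∈ K(𝔤ₙ). Then the scalar part of R vanishes on real vectors: π(R(x, y)) = 0 whenever x, y ∈ ℝⁿ ⊆ ℂⁿ (vectors with all coordinates real). Together with the type-(1,1) property this expresses that for n > 2 every torsion-free S¹·GL(n,ℝ)-structure is automatically integrable. -/
/-- **The scalar part of a curvature tensor of `𝔤ₙ` vanishes on real vectors (`n ≥ 3`).**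
If `R : ℂⁿ × ℂⁿ → 𝔤ₙ` is an alternating `ℝ`-bilinear map satisfying the first Bianchi
identity, then for real vectors `x, y ∈ ℝⁿ ⊆ ℂⁿ` the value `R x y` is a real matrix,
i.e. its `i t Iₙ`-component vanishes. -/
theorem curvature_scalar_part_vanishes_on_reals (n : ℕ) (hn : 3 ≤ n)
    (R : (Fin n → ℂ) →ₗ[ℝ] (Fin n → ℂ) →ₗ[ℝ] Matrix (Fin n) (Fin n) ℂ)
    (halt : ∀ x y, R x y = - R y x)
    (hG : ∀ x y, R x y ∈ gLieAlg n)
    (hBianchi : ∀ x y z,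
      (R x y).mulVec z + (R y z).mulVec x + (R z x).mulVec y = 0) :
    ∀ x y : Fin n → ℝ,
      ∃ M : Matrix (Fin n) (Fin n) ℝ,
        R (fun j => (x j : ℂ)) (fun j => (y j : ℂ)) = M.map (fun a => (a : ℂ)) := by
  haveI : NeZero n := ⟨by omega⟩
  set i0 : Fin n := ⟨0, by omega⟩ with hi0
  -- the real-lift linear map
  let L : (Fin n → ℝ) →ₗ[ℝ] (Fin n → ℂ) :=
    { toFun := fun x j => (x j : ℂ)
      map_add' := by intro a b; funext j; push_cast; simp
      map_smul' := by intro c a; funext j; push_cast; simp }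
  -- extract the imaginary-scalar coefficient: entry (i0,i0) imaginary part
  let E : Matrix (Fin n) (Fin n) ℂ →ₗ[ℝ] ℝ :=
    { toFun := fun A => (A i0 i0).im
      map_add' := by intro A B; simp [Matrix.add_apply]
      map_smul' := by intro c A; simp [Matrix.smul_apply] }
  let T : (Fin n → ℝ) →ₗ[ℝ] (Fin n → ℝ) →ₗ[ℝ] ℝ := (R.compl₁₂ L L).compr₂ E
  have hT : ∀ x y, T x y = (R (L x) (L y) i0 i0).im := fun x y => rfl
  -- the coefficient in any decomposition equals E
  have key : ∀ (x y : Fin n → ℂ) (M : Matrix (Fin n) (Fin n) ℝ) (t : ℝ),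
      R x y = M.map (fun a => (a : ℂ)) + ((t : ℂ) * Complex.I) • (1 : Matrix (Fin n) (Fin n) ℂ) →
      (R x y i0 i0).im = t := by
    intro x y M t h
    rw [h]
    simp [Matrix.add_apply, Matrix.map_apply, Matrix.smul_apply, Matrix.one_apply_eq]
  -- imaginary part of mulVec on real vectors
  have hmv : ∀ (x y z : Fin n → ℝ) (k : Fin n),
      ((R (L x) (L y)).mulVec (L z) k).im = T x y * z k := by
    intro x y z k
    obtain ⟨M, t, h⟩ := hG (L x) (L y)
    have ht : T x y = t := by rw [hT]; exact key _ _ M t h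
    rw [ht, h, Matrix.add_mulVec, Matrix.smul_mulVec, Matrix.one_mulVec]
    have h1 : ((M.map (fun a => (a : ℂ))).mulVec (L z) k).im = 0 := by
      simp only [Matrix.mulVec, dotProduct, Matrix.map_apply]
      have : ∀ j, ((M k j : ℂ) * ((z j : ℝ) : ℂ)) = ((M k j * z j : ℝ) : ℂ) := by
        intro j; push_cast; ring
      simp only [L, LinearMap.coe_mk, AddHom.coe_mk]
      rw [Finset.sum_congr rfl (fun j _ => this j), ← Complex.ofReal_sum]
      simp
    simp only [Pi.add_apply, Pi.smul_apply, Complex.add_im, h1, zero_add, smul_eq_mul]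
    simp only [L, LinearMap.coe_mk, AddHom.coe_mk]
    simp [Complex.mul_im]
  -- the Bianchi identity for the scalar coefficients
  have hid : ∀ (x y z : Fin n → ℝ) (k : Fin n),
      T x y * z k + T y z * x k + T z x * y k = 0 := by
    intro x y z k
    have hb := congrArg Complex.im (congrFun (hBianchi (L x) (L y) (L z)) k)
    simp only [Pi.add_apply, Complex.add_im, Pi.zero_apply, Complex.zero_im] at hb
    rw [hmv x y z k, hmv y z x k, hmv z x y k] at hb
    exact hb
  -- T vanishes on basis vectors
  have hbasis : ∀ i j : Fin n, T (Pi.single i 1) (Pi.single j 1) = 0 := by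
    intro i j
    by_cases hij : i = j
    · subst hij
      have h0 : R (L (Pi.single i 1)) (L (Pi.single i 1)) = 0 := by
        have := halt (L (Pi.single i 1)) (L (Pi.single i 1))
        have h2 : (2 : ℝ) • R (L (Pi.single i 1)) (L (Pi.single i 1)) = 0 := by
          rw [two_smul]; nth_rewrite 1 [this]; simp
        have := smul_eq_zero.mp h2
        rcases this with h | h
        · norm_num at h
        · exact h
      rw [hT, h0]; simp
    · obtain ⟨k, hki, hkj⟩ : ∃ k : Fin n, k ≠ i ∧ k ≠ j := by
        by_contra h
        push_neg at h
        have hsub : (Finset.univ : Finset (Fin n)) ⊆ {i, j} := by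
          intro k _
          rcases Classical.em (k = i) with h' | h'
          · simp [h']
          · simp [h k h']
        have := Finset.card_le_card hsub
        simp [Finset.card_univ] at this
        have hle : ({i, j} : Finset (Fin n)).card ≤ 2 := Finset.card_insert_le _ _ |>.trans (by simp)
        omega
      have := hid (Pi.single i 1) (Pi.single j 1) (Pi.single k 1) k
      rw [Pi.single_eq_same, Pi.single_eq_of_ne hki, Pi.single_eq_of_ne hkj] at this
      simpa using this
  -- hence T = 0
  have hTzero : ∀ x y, T x y = 0 := by
    have : T = 0 := by
      apply (Pi.basisFun ℝ (Fin n)).ext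
      intro i
      apply (Pi.basisFun ℝ (Fin n)).ext
      intro j
      simpa [Pi.basisFun_apply] using hbasis i j
    intro x y; rw [this]; simp
  -- conclude
  intro x y
  obtain ⟨M, t, h⟩ := hG (L x) (L y)
  have ht : t = 0 := by
    have := key (L x) (L y) M t h
    rw [← hT] at this
    rw [← this, hTzero]
  refine ⟨M, ?_⟩
  have hLx : (fun j => ((x j : ℝ) : ℂ)) = L x := rfl
  have hLy : (fun j => ((y j : ℝ) : ℂ)) = L y := rfl
  rw [hLx, hLy, h, ht]
  simp
end

section
/- Let n ≥ 3 and let R ∈ K(𝔤ₙ). Then the scalar part of R is anti-invariant under complex conjugation: π(R(x̄, ȳ)) = −π(R(x, y)) for all x, y ∈ ℂⁿ, where x̄ denotes componentwise complex conjugation. -/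
/-!
Write `π(X)` for the scalar part and `B(x, y) = π(R x y)`, an `ℝ`-bilinear form on `ℂⁿ`.
For basis vectors `e_j, e_k` and a third index `l ∉ {j, k}` (it exists as `n ≥ 3`), the imaginary
part of the `l`-th entry of the Bianchi identity for `c e_j, c e_k, c e_l` is `π(R(c e_j, c e_k))`,
since the real matrix part contributes nothing and the scalar part sits on the diagonal. Taking
`c = 1` and `c = i`, `B` vanishes on pairs of real and on pairs of imaginary basis vectors.
Conjugation fixes `e_j` and negates `i e_j`, so on the remaining mixed pairs it flips the sign of
`B`; by bilinearity `B(x̄, ȳ) = -B(x, y)`.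
-/

open Complex Matrix

variable {ι : Type*} [DecidableEq ι]

theorem im_map_ofReal_add_smul_one_apply (M : Matrix ι ι ℝ) (t : ℝ) (j k : ι) :
    ((M.map (fun a => (a : ℂ)) + ((t : ℂ) * I) • (1 : Matrix ι ι ℂ)) j k).im =
      if j = k then t else 0 := by
  by_cases h : j = k <;> simp [h, one_apply]

variable [Fintype ι]

/-- `π`, extended from `𝔤ₙ` to an `ℝ`-linear map on all complex matrices. -/
noncomputable def scalarPart : Matrix ι ι ℂ →ₗ[ℝ] ℝ :=
  (Fintype.card ι : ℝ)⁻¹ • (imLm ∘ₗ traceLinearMap ι ℝ ℂ)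

theorem scalarPart_map_ofReal_add_smul_one [Nonempty ι] (M : Matrix ι ι ℝ) (t : ℝ) :
    scalarPart (M.map (fun a => (a : ℂ)) + ((t : ℂ) * I) • (1 : Matrix ι ι ℂ)) = t := by
  have hcard : (Fintype.card ι : ℝ) ≠ 0 := by positivity
  simp only [scalarPart, LinearMap.smul_apply, LinearMap.comp_apply, traceLinearMap_apply,
    imLm_coe, trace, diag_apply, im_sum, im_map_ofReal_add_smul_one_apply, if_true,
    Finset.sum_const, Finset.card_univ, nsmul_eq_mul, smul_eq_mul]
  field_simp

theorem im_apply_eq_ite_scalarPart [Nonempty ι] {X : Matrix ι ι ℂ}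
    (hX : ∃ (M : Matrix ι ι ℝ) (t : ℝ), X = M.map (fun a => (a : ℂ)) + ((t : ℂ) * I) • 1)
    (j k : ι) : (X j k).im = if j = k then scalarPart X else 0 := by
  obtain ⟨M, t, rfl⟩ := hX
  rw [im_map_ofReal_add_smul_one_apply, scalarPart_map_ofReal_add_smul_one]

theorem apply_star_star_eq_neg (B : (ι → ℂ) →ₗ[ℝ] (ι → ℂ) →ₗ[ℝ] ℝ)
    (h_one : ∀ j k, B (Pi.single j 1) (Pi.single k 1) = 0)
    (h_I : ∀ j k, B (Pi.single j I) (Pi.single k I) = 0) (x y : ι → ℂ) :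
    B (star x) (star y) = -B x y := by
  let b := Pi.basis fun _ : ι => basisOneI
  let σ : (ι → ℂ) →ₗ[ℝ] (ι → ℂ) := (starL' ℝ : (ι → ℂ) ≃L[ℝ] (ι → ℂ))
  have hσ (j : ι) (c : ℂ) : σ (Pi.single j c) = Pi.single j (star c) :=
    (Pi.single_star (f := fun _ : ι => ℂ) j c).symm
  suffices B.compl₁₂ σ σ = -B from LinearMap.congr_fun₂ this x y
  refine LinearMap.ext_basis b b fun ⟨j, p⟩ ⟨k, q⟩ => ?_
  simp only [LinearMap.compl₁₂_apply, LinearMap.neg_apply, b, Pi.basis_apply, hσ]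
  fin_cases p <;> fin_cases q <;> simp [h_one, h_I, Pi.single_neg]

theorem scalarPart_apply_single_single
    (R : (ι → ℂ) →ₗ[ℝ] (ι → ℂ) →ₗ[ℝ] Matrix ι ι ℂ)
    (hG : ∀ x y, ∃ (M : Matrix ι ι ℝ) (t : ℝ),
      R x y = M.map (fun a => (a : ℂ)) + ((t : ℂ) * I) • 1)
    (hBianchi : ∀ x y z, R x y *ᵥ z + R y z *ᵥ x + R z x *ᵥ y = 0)
    {c : ℂ} (hc : c ≠ 0) {j k l : ι} (hlj : l ≠ j) (hlk : l ≠ k) :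
    scalarPart (R (Pi.single j c) (Pi.single k c)) = 0 := by
  have : Nonempty ι := ⟨l⟩
  have hl := congrFun (hBianchi (Pi.single j c) (Pi.single k c) (Pi.single l c)) l
  simp only [mulVec_single, Pi.add_apply, Pi.smul_apply, op_smul_eq_mul, col_apply,
    Pi.zero_apply, ← add_mul, mul_eq_zero, hc, or_false] at hl
  simpa [im_apply_eq_ite_scalarPart (hG _ _), hlj, hlk] using congrArg im hl

theorem scalarPart_apply_star_star
    (R : (ι → ℂ) →ₗ[ℝ] (ι → ℂ) →ₗ[ℝ] Matrix ι ι ℂ) (hι : 3 ≤ Fintype.card ι)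
    (hG : ∀ x y, ∃ (M : Matrix ι ι ℝ) (t : ℝ),
      R x y = M.map (fun a => (a : ℂ)) + ((t : ℂ) * I) • 1)
    (hBianchi : ∀ x y z, R x y *ᵥ z + R y z *ᵥ x + R z x *ᵥ y = 0) (x y : ι → ℂ) :
    scalarPart (R (star x) (star y)) = -scalarPart (R x y) := by
  have h_single {c : ℂ} (hc : c ≠ 0) (j k : ι) :
      scalarPart (R (Pi.single j c) (Pi.single k c)) = 0 := by
    have hjk : ({j, k} : Finset ι).card < (Finset.univ : Finset ι).card :=
      Finset.card_le_two.trans_lt (by rw [Finset.card_univ]; omega)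
    obtain ⟨l, -, hl⟩ := Finset.exists_mem_notMem_of_card_lt_card hjk
    simp only [Finset.mem_insert, Finset.mem_singleton, not_or] at hl
    exact scalarPart_apply_single_single R hG hBianchi hc hl.1 hl.2
  exact apply_star_star_eq_neg (R.compr₂ scalarPart) (h_single one_ne_zero)
    (h_single I_ne_zero) x y

theorem curvature_scalar_part_anti_invariant_general (n : ℕ) (hn : 3 ≤ n)
    (R : (Fin n → ℂ) →ₗ[ℝ] (Fin n → ℂ) →ₗ[ℝ] Matrix (Fin n) (Fin n) ℂ)
    (hG : ∀ x y, R x y ∈ gLieAlg n)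
    (hBianchi : ∀ x y z,
      (R x y).mulVec z + (R y z).mulVec x + (R z x).mulVec y = 0) :
    ∀ (x y : Fin n → ℂ) (M M' : Matrix (Fin n) (Fin n) ℝ) (t t' : ℝ),
      R x y = M.map (fun a => (a : ℂ))
          + ((t : ℂ) * Complex.I) • (1 : Matrix (Fin n) (Fin n) ℂ) →
      R (fun j => starRingEnd ℂ (x j)) (fun j => starRingEnd ℂ (y j))
          = M'.map (fun a => (a : ℂ))
          + ((t' : ℂ) * Complex.I) • (1 : Matrix (Fin n) (Fin n) ℂ) →
      t' = -t := by
  intro x y M M' t t' h h'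
  have : Nonempty (Fin n) := ⟨⟨0, by omega⟩⟩
  have key : scalarPart (R (fun j => starRingEnd ℂ (x j)) (fun j => starRingEnd ℂ (y j))) =
      -scalarPart (R x y) :=
    scalarPart_apply_star_star R (by simpa using hn) hG hBianchi x y
  rwa [h, h', scalarPart_map_ofReal_add_smul_one, scalarPart_map_ofReal_add_smul_one] at key

/-- **Anti-invariance of the scalar part under conjugation (`n ≥ 3`).**
If `R : ℂⁿ × ℂⁿ → 𝔤ₙ` is an alternating `ℝ`-bilinear map satisfying the first Bianchi
identity, and `R x y = M + i t Iₙ`, `R x̄ ȳ = M' + i t' Iₙ` with `M, M'` real, then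
`t' = -t`; i.e. `π(R(x̄, ȳ)) = -π(R(x, y))`. -/
theorem curvature_scalar_part_anti_invariant (n : ℕ) (hn : 3 ≤ n)
    (R : (Fin n → ℂ) →ₗ[ℝ] (Fin n → ℂ) →ₗ[ℝ] Matrix (Fin n) (Fin n) ℂ)
    (halt : ∀ x y, R x y = - R y x)
    (hG : ∀ x y, R x y ∈ gLieAlg n)
    (hBianchi : ∀ x y z,
      (R x y).mulVec z + (R y z).mulVec x + (R z x).mulVec y = 0) :
    ∀ (x y : Fin n → ℂ) (M M' : Matrix (Fin n) (Fin n) ℝ) (t t' : ℝ),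
      R x y = M.map (fun a => (a : ℂ))
          + ((t : ℂ) * Complex.I) • (1 : Matrix (Fin n) (Fin n) ℂ) →
      R (fun j => starRingEnd ℂ (x j)) (fun j => starRingEnd ℂ (y j))
          = M'.map (fun a => (a : ℂ))
          + ((t' : ℂ) * Complex.I) • (1 : Matrix (Fin n) (Fin n) ℂ) →
      t' = -t :=
  curvature_scalar_part_anti_invariant_general n hn R hG hBianchi
end

section
/- For n = 2, the real vector space K(𝔤₂) of curvature tensors of torsion-free S¹·GL(2,ℝ)-structures has dimension dim_ℝ K(𝔤₂) = 14, corresponding to the decomposition K(𝔤₂) ≅ S²(V*) ⊕ V ⊗ S³(V*) ⊕ ℂ ⊕ ℝ for V = ℝ². -/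
lemma gLieAlg.zero_mem (n : ℕ) : (0 : Matrix (Fin n) (Fin n) ℂ) ∈ gLieAlg n := by
  refine ⟨0, 0, ?_⟩
  ext i j
  simp [Matrix.map_apply]

lemma gLieAlg.add_mem {n : ℕ} {X Y : Matrix (Fin n) (Fin n) ℂ}
    (hX : X ∈ gLieAlg n) (hY : Y ∈ gLieAlg n) : X + Y ∈ gLieAlg n := by
  obtain ⟨M, t, rfl⟩ := hX
  obtain ⟨M', t', rfl⟩ := hY
  refine ⟨M + M', t + t', ?_⟩
  ext i j
  simp only [Matrix.add_apply, Matrix.map_apply, Matrix.smul_apply, Matrix.one_apply,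
    smul_eq_mul]
  push_cast
  split_ifs <;> ring

lemma gLieAlg.smul_mem {n : ℕ} (c : ℝ) {X : Matrix (Fin n) (Fin n) ℂ}
    (hX : X ∈ gLieAlg n) : c • X ∈ gLieAlg n := by
  obtain ⟨M, t, rfl⟩ := hX
  refine ⟨c • M, c * t, ?_⟩
  ext i j
  simp only [Matrix.add_apply, Matrix.map_apply, Matrix.smul_apply, Matrix.one_apply,
    smul_eq_mul, Complex.real_smul]
  push_cast
  split_ifs <;> ring

/-- The space `K(𝔤ₙ)` of curvature tensors of torsion-free `S¹·GL(n,ℝ)`-structures: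
alternating `ℝ`-bilinear maps `R : ℂⁿ × ℂⁿ → 𝔤ₙ` satisfying the first Bianchi identity,
realized as a real subspace of the space of functions `ℂⁿ → ℂⁿ → Matrix n n ℂ`. -/
noncomputable def curvatureSpace (n : ℕ) :
    Submodule ℝ ((Fin n → ℂ) → (Fin n → ℂ) → Matrix (Fin n) (Fin n) ℂ) where
  carrier := {R |
    (∀ x x' y, R (x + x') y = R x y + R x' y) ∧
    (∀ (c : ℝ) (x y), R (c • x) y = c • R x y) ∧
    (∀ x y y', R x (y + y') = R x y + R x y') ∧
    (∀ (c : ℝ) (x y), R x (c • y) = c • R x y) ∧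
    (∀ x y, R x y = - R y x) ∧
    (∀ x y, R x y ∈ gLieAlg n) ∧
    (∀ x y z, (R x y).mulVec z + (R y z).mulVec x + (R z x).mulVec y = 0)}
  add_mem' := by
    rintro R S ⟨hR1, hR2, hR3, hR4, hR5, hR6, hR7⟩ ⟨hS1, hS2, hS3, hS4, hS5, hS6, hS7⟩
    refine ⟨?_, ?_, ?_, ?_, ?_, ?_, ?_⟩
    · intro x x' y
      simp only [Pi.add_apply, hR1 x x' y, hS1 x x' y]; abel
    · intro c x y
      simp only [Pi.add_apply, hR2 c x y, hS2 c x y, smul_add]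
    · intro x y y'
      simp only [Pi.add_apply, hR3 x y y', hS3 x y y']; abel
    · intro c x y
      simp only [Pi.add_apply, hR4 c x y, hS4 c x y, smul_add]
    · intro x y
      simp only [Pi.add_apply, hR5 x y, hS5 x y]; abel
    · intro x y
      exact gLieAlg.add_mem (hR6 x y) (hS6 x y)
    · intro x y z
      simp only [Pi.add_apply, Matrix.add_mulVec]
      calc (R x y).mulVec z + (S x y).mulVec z + ((R y z).mulVec x + (S y z).mulVec x)
            + ((R z x).mulVec y + (S z x).mulVec y)
          = ((R x y).mulVec z + (R y z).mulVec x + (R z x).mulVec y)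
            + ((S x y).mulVec z + (S y z).mulVec x + (S z x).mulVec y) := by abel
        _ = 0 := by rw [hR7 x y z, hS7 x y z, add_zero]
  zero_mem' := by
    refine ⟨?_, ?_, ?_, ?_, ?_, ?_, ?_⟩ <;>
      first
        | (intro x y; exact gLieAlg.zero_mem n)
        | simp [Matrix.zero_mulVec]
  smul_mem' := by
    rintro c R ⟨hR1, hR2, hR3, hR4, hR5, hR6, hR7⟩
    refine ⟨?_, ?_, ?_, ?_, ?_, ?_, ?_⟩
    · intro x x' y
      simp only [Pi.smul_apply, hR1 x x' y, smul_add]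
    · intro c' x y
      simp only [Pi.smul_apply, hR2 c' x y, smul_comm c c']
    · intro x y y'
      simp only [Pi.smul_apply, hR3 x y y', smul_add]
    · intro c' x y
      simp only [Pi.smul_apply, hR4 c' x y, smul_comm c c']
    · intro x y
      simp only [Pi.smul_apply, hR5 x y, smul_neg]
    · intro x y
      exact gLieAlg.smul_mem c (hR6 x y)
    · intro x y z
      simp only [Pi.smul_apply, Matrix.smul_mulVec, ← smul_add, hR7 x y z, smul_zero]


namespace Curv2

set_option maxHeartbeats 2000000

noncomputable section

/-- The four standard real basis vectors of `ℂ²` over `ℝ`. -/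
def bv : Fin 4 → (Fin 2 → ℂ) :=
  ![![1, 0], ![0, 1], ![Complex.I, 0], ![0, Complex.I]]

/-- The real coordinate functions on `ℂ²`. -/
def cc : Fin 4 → (Fin 2 → ℂ) → ℝ :=
  ![fun x => (x 0).re, fun x => (x 1).re, fun x => (x 0).im, fun x => (x 1).im]

lemma decompose (x : Fin 2 → ℂ) :
    x = cc 0 x • bv 0 + cc 1 x • bv 1 + cc 2 x • bv 2 + cc 3 x • bv 3 := by
  funext j
  fin_cases j <;> simp [bv, cc, Complex.real_smul]

lemma cc_add (p : Fin 4) (x y : Fin 2 → ℂ) : cc p (x + y) = cc p x + cc p y := by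
  fin_cases p <;> simp [cc]

lemma cc_smul (p : Fin 4) (r : ℝ) (x : Fin 2 → ℂ) : cc p (r • x) = r * cc p x := by
  fin_cases p <;> simp [cc, Complex.real_smul]

/-- The matrix `M + i t I` in `𝔤₂` with parameters `v = (M₀₀, M₀₁, M₁₀, M₁₁, t)`. -/
def matOf (v : Fin 5 → ℝ) : Matrix (Fin 2) (Fin 2) ℂ :=
  !![(v 0 : ℂ) + v 4 * Complex.I, (v 1 : ℂ); (v 2 : ℂ), (v 3 : ℂ) + v 4 * Complex.I]

/-- The five real parameters of a matrix in `𝔤₂`. -/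
def coordOf (X : Matrix (Fin 2) (Fin 2) ℂ) : Fin 5 → ℝ :=
  ![(X 0 0).re, (X 0 1).re, (X 1 0).re, (X 1 1).re, (X 0 0).im]

lemma coordOf_matOf (v : Fin 5 → ℝ) : coordOf (matOf v) = v := by
  funext j; fin_cases j <;> simp [coordOf, matOf]

lemma matOf_mem (v : Fin 5 → ℝ) : matOf v ∈ gLieAlg 2 := by
  refine ⟨!![v 0, v 1; v 2, v 3], v 4, ?_⟩
  ext i j
  fin_cases i <;> fin_cases j <;>
    simp [matOf, Matrix.map_apply, Matrix.one_apply]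

lemma matOf_zero : matOf 0 = 0 := by
  ext i j; fin_cases i <;> fin_cases j <;> simp [matOf]

lemma matOf_coordOf {X : Matrix (Fin 2) (Fin 2) ℂ} (h : X ∈ gLieAlg 2) :
    matOf (coordOf X) = X := by
  obtain ⟨M, t, rfl⟩ := h
  ext i j
  fin_cases i <;> fin_cases j <;>
    · simp [matOf, coordOf, Matrix.map_apply, Matrix.one_apply]
      try ring

lemma gfacts {X : Matrix (Fin 2) (Fin 2) ℂ} (h : X ∈ gLieAlg 2) :
    (X 0 1).im = 0 ∧ (X 1 0).im = 0 ∧ (X 1 1).im = (X 0 0).im := by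
  obtain ⟨M, t, rfl⟩ := h
  refine ⟨?_, ?_, ?_⟩ <;> simp [Matrix.map_apply, Matrix.one_apply]

/-- Projection onto the `(k,j)` coordinate, as a linear map. -/
def pj (k : Fin 6) (j : Fin 5) : (Fin 6 → Fin 5 → ℝ) →ₗ[ℝ] ℝ :=
  (LinearMap.proj (R := ℝ) (φ := fun _ : Fin 5 => ℝ) j).comp
    (LinearMap.proj (R := ℝ) (φ := fun _ : Fin 6 => (Fin 5 → ℝ)) k)

/-- The 16 Bianchi relations on the coordinates of a curvature tensor. -/
def bianchiMap : (Fin 6 → Fin 5 → ℝ) →ₗ[ℝ] (Fin 16 → ℝ) :=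
  LinearMap.pi (![
    - pj 0 4 + pj 3 0 - pj 1 1,
    pj 0 0 + pj 3 4,
    pj 3 2 - pj 1 3,
    pj 0 2 - pj 1 4,
    pj 4 0 - pj 2 1,
    pj 0 1 + pj 4 4,
    - pj 0 4 + pj 4 2 - pj 2 3,
    pj 0 3 - pj 2 4,
    pj 5 0 + pj 2 4,
    pj 1 1 + pj 5 4 - pj 2 0,
    - pj 1 4 + pj 5 2,
    pj 1 3 - pj 2 2,
    pj 5 1 + pj 4 4,
    pj 3 1 - pj 4 0,
    - pj 3 4 + pj 5 3,
    pj 3 3 + pj 5 4 - pj 4 2 ])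

lemma bianchiMap_surjective : Function.Surjective bianchiMap := by
  intro w
  refine ⟨![![w 1, w 5, w 3, w 7, 0], ![0,0,0,0,0],
            ![-w 9, -w 4, -w 11, -w 6, 0],
            ![w 0, w 13, w 2, w 15, 0], ![0,0,0,0,0],
            ![w 8, w 12, w 10, w 14, 0]], ?_⟩
  funext i
  fin_cases i
  · show -(0:ℝ) + w 0 - 0 = w 0; ring
  · show w 1 + (0:ℝ) = w 1; ring
  · show w 2 - (0:ℝ) = w 2; ring
  · show w 3 - (0:ℝ) = w 3; ring
  · show (0:ℝ) - -w 4 = w 4; ring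
  · show w 5 + (0:ℝ) = w 5; ring
  · show -(0:ℝ) + 0 - -w 6 = w 6; ring
  · show w 7 - (0:ℝ) = w 7; ring
  · show w 8 + (0:ℝ) = w 8; ring
  · show (0:ℝ) + 0 - -w 9 = w 9; ring
  · show -(0:ℝ) + w 10 = w 10; ring
  · show (0:ℝ) - -w 11 = w 11; ring
  · show w 12 + (0:ℝ) = w 12; ring
  · show w 13 - (0:ℝ) = w 13; ring
  · show -(0:ℝ) + w 14 = w 14; ring
  · show w 15 + (0:ℝ) - 0 = w 15; ring

/-- The antisymmetric bilinear coefficient attached to a pair of coordinates. -/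
def ee (p q : Fin 4) (x y : Fin 2 → ℂ) : ℝ :=
  cc p x * cc q y - cc q x * cc p y

/-- The curvature tensor built from a coordinate vector. -/
def mkCurv (c : Fin 6 → Fin 5 → ℝ) :
    (Fin 2 → ℂ) → (Fin 2 → ℂ) → Matrix (Fin 2) (Fin 2) ℂ := fun x y =>
  ee 0 1 x y • matOf (c 0) + ee 0 2 x y • matOf (c 1) + ee 0 3 x y • matOf (c 2) +
  ee 1 2 x y • matOf (c 3) + ee 1 3 x y • matOf (c 4) + ee 2 3 x y • matOf (c 5)

lemma mkCurv_bianchi (c : Fin 6 → Fin 5 → ℝ) (hc : bianchiMap c = 0) (x y z : Fin 2 → ℂ) :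
    (mkCurv c x y).mulVec z + (mkCurv c y z).mulVec x + (mkCurv c z x).mulVec y = 0 := by
  have h0 : -c 0 4 + c 3 0 - c 1 1 = 0 := congrFun hc 0
  have h1 : c 0 0 + c 3 4 = 0 := congrFun hc 1
  have h2 : c 3 2 - c 1 3 = 0 := congrFun hc 2
  have h3 : c 0 2 - c 1 4 = 0 := congrFun hc 3
  have h4 : c 4 0 - c 2 1 = 0 := congrFun hc 4
  have h5 : c 0 1 + c 4 4 = 0 := congrFun hc 5
  have h6 : -c 0 4 + c 4 2 - c 2 3 = 0 := congrFun hc 6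
  have h7 : c 0 3 - c 2 4 = 0 := congrFun hc 7
  have h8 : c 5 0 + c 2 4 = 0 := congrFun hc 8
  have h9 : c 1 1 + c 5 4 - c 2 0 = 0 := congrFun hc 9
  have h10 : -c 1 4 + c 5 2 = 0 := congrFun hc 10
  have h11 : c 1 3 - c 2 2 = 0 := congrFun hc 11
  have h12 : c 5 1 + c 4 4 = 0 := congrFun hc 12
  have h13 : c 3 1 - c 4 0 = 0 := congrFun hc 13
  have h14 : -c 3 4 + c 5 3 = 0 := congrFun hc 14
  have h15 : c 3 3 + c 5 4 - c 4 2 = 0 := congrFun hc 15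
  funext j
  fin_cases j
  · apply Complex.ext
    · simp [mkCurv, ee, cc, matOf, Matrix.mulVec, dotProduct, Fin.sum_univ_two,
        Complex.real_smul]
      linear_combination ((x 0).re*((y 1).re*(z 0).im-(y 0).im*(z 1).re)-(x 1).re*((y 0).re*(z 0).im-(y 0).im*(z 0).re)+(x 0).im*((y 0).re*(z 1).re-(y 1).re*(z 0).re)) * h0 + ((x 0).re*((y 1).re*(z 1).im-(y 1).im*(z 1).re)-(x 1).re*((y 0).re*(z 1).im-(y 1).im*(z 0).re)+(x 1).im*((y 0).re*(z 1).re-(y 1).re*(z 0).re)) * h4 + ((x 0).re*((y 0).im*(z 1).im-(y 1).im*(z 0).im)-(x 0).im*((y 0).re*(z 1).im-(y 1).im*(z 0).re)+(x 1).im*((y 0).re*(z 0).im-(y 0).im*(z 0).re)) * h8 + ((x 1).re*((y 0).im*(z 1).im-(y 1).im*(z 0).im)-(x 0).im*((y 1).re*(z 1).im-(y 1).im*(z 1).re)+(x 1).im*((y 1).re*(z 0).im-(y 0).im*(z 1).re)) * h12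
    · simp [mkCurv, ee, cc, matOf, Matrix.mulVec, dotProduct, Fin.sum_univ_two,
        Complex.real_smul]
      linear_combination ((x 0).re*((y 1).re*(z 0).im-(y 0).im*(z 1).re)-(x 1).re*((y 0).re*(z 0).im-(y 0).im*(z 0).re)+(x 0).im*((y 0).re*(z 1).re-(y 1).re*(z 0).re)) * h1 + ((x 0).re*((y 1).re*(z 1).im-(y 1).im*(z 1).re)-(x 1).re*((y 0).re*(z 1).im-(y 1).im*(z 0).re)+(x 1).im*((y 0).re*(z 1).re-(y 1).re*(z 0).re)) * h5 + ((x 0).re*((y 0).im*(z 1).im-(y 1).im*(z 0).im)-(x 0).im*((y 0).re*(z 1).im-(y 1).im*(z 0).re)+(x 1).im*((y 0).re*(z 0).im-(y 0).im*(z 0).re)) * h9 + ((x 1).re*((y 0).im*(z 1).im-(y 1).im*(z 0).im)-(x 0).im*((y 1).re*(z 1).im-(y 1).im*(z 1).re)+(x 1).im*((y 1).re*(z 0).im-(y 0).im*(z 1).re)) * h13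
  · apply Complex.ext
    · simp [mkCurv, ee, cc, matOf, Matrix.mulVec, dotProduct, Fin.sum_univ_two,
        Complex.real_smul]
      linear_combination ((x 0).re*((y 1).re*(z 0).im-(y 0).im*(z 1).re)-(x 1).re*((y 0).re*(z 0).im-(y 0).im*(z 0).re)+(x 0).im*((y 0).re*(z 1).re-(y 1).re*(z 0).re)) * h2 + ((x 0).re*((y 1).re*(z 1).im-(y 1).im*(z 1).re)-(x 1).re*((y 0).re*(z 1).im-(y 1).im*(z 0).re)+(x 1).im*((y 0).re*(z 1).re-(y 1).re*(z 0).re)) * h6 + ((x 0).re*((y 0).im*(z 1).im-(y 1).im*(z 0).im)-(x 0).im*((y 0).re*(z 1).im-(y 1).im*(z 0).re)+(x 1).im*((y 0).re*(z 0).im-(y 0).im*(z 0).re)) * h10 + ((x 1).re*((y 0).im*(z 1).im-(y 1).im*(z 0).im)-(x 0).im*((y 1).re*(z 1).im-(y 1).im*(z 1).re)+(x 1).im*((y 1).re*(z 0).im-(y 0).im*(z 1).re)) * h14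
    · simp [mkCurv, ee, cc, matOf, Matrix.mulVec, dotProduct, Fin.sum_univ_two,
        Complex.real_smul]
      linear_combination ((x 0).re*((y 1).re*(z 0).im-(y 0).im*(z 1).re)-(x 1).re*((y 0).re*(z 0).im-(y 0).im*(z 0).re)+(x 0).im*((y 0).re*(z 1).re-(y 1).re*(z 0).re)) * h3 + ((x 0).re*((y 1).re*(z 1).im-(y 1).im*(z 1).re)-(x 1).re*((y 0).re*(z 1).im-(y 1).im*(z 0).re)+(x 1).im*((y 0).re*(z 1).re-(y 1).re*(z 0).re)) * h7 + ((x 0).re*((y 0).im*(z 1).im-(y 1).im*(z 0).im)-(x 0).im*((y 0).re*(z 1).im-(y 1).im*(z 0).re)+(x 1).im*((y 0).re*(z 0).im-(y 0).im*(z 0).re)) * h11 + ((x 1).re*((y 0).im*(z 1).im-(y 1).im*(z 0).im)-(x 0).im*((y 1).re*(z 1).im-(y 1).im*(z 1).re)+(x 1).im*((y 1).re*(z 0).im-(y 0).im*(z 1).re)) * h15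

lemma mkCurv_mem (c : Fin 6 → Fin 5 → ℝ) (hc : bianchiMap c = 0) :
    mkCurv c ∈ curvatureSpace 2 := by
  refine ⟨?_, ?_, ?_, ?_, ?_, ?_, ?_⟩
  · intro x x' y; simp only [mkCurv, ee, cc_add]; module
  · intro r x y; simp only [mkCurv, ee, cc_smul]; module
  · intro x y y'; simp only [mkCurv, ee, cc_add]; module
  · intro r x y; simp only [mkCurv, ee, cc_smul]; module
  · intro x y; simp only [mkCurv, ee]; module
  · intro x y
    exact gLieAlg.add_mem (gLieAlg.add_mem (gLieAlg.add_mem (gLieAlg.add_mem (gLieAlg.add_mem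
      (gLieAlg.smul_mem _ (matOf_mem _)) (gLieAlg.smul_mem _ (matOf_mem _)))
      (gLieAlg.smul_mem _ (matOf_mem _))) (gLieAlg.smul_mem _ (matOf_mem _)))
      (gLieAlg.smul_mem _ (matOf_mem _))) (gLieAlg.smul_mem _ (matOf_mem _))
  · exact mkCurv_bianchi c hc

lemma expand_basis (R : (Fin 2 → ℂ) → (Fin 2 → ℂ) → Matrix (Fin 2) (Fin 2) ℂ)
    (h1 : ∀ x x' y, R (x + x') y = R x y + R x' y)
    (h2 : ∀ (c : ℝ) (x y), R (c • x) y = c • R x y)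
    (h3 : ∀ x y y', R x (y + y') = R x y + R x y')
    (h4 : ∀ (c : ℝ) (x y), R x (c • y) = c • R x y)
    (h5 : ∀ x y, R x y = - R y x) (x y : Fin 2 → ℂ) :
    R x y = ee 0 1 x y • R (bv 0) (bv 1) + ee 0 2 x y • R (bv 0) (bv 2) +
      ee 0 3 x y • R (bv 0) (bv 3) + ee 1 2 x y • R (bv 1) (bv 2) +
      ee 1 3 x y • R (bv 1) (bv 3) + ee 2 3 x y • R (bv 2) (bv 3) := by
  have diag : ∀ p, R (bv p) (bv p) = 0 := by
    intro p
    have h := h5 (bv p) (bv p)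
    have h2' : (2 : ℝ) • R (bv p) (bv p) = 0 := by
      rw [two_smul]; nth_rewrite 2 [h]; exact add_neg_cancel _
    rcases smul_eq_zero.mp h2' with h' | h'
    · norm_num at h'
    · exact h'
  conv_lhs => rw [decompose x, decompose y]
  simp only [h1, h2, h3, h4]
  rw [diag 0, diag 1, diag 2, diag 3,
    show R (bv 1) (bv 0) = - R (bv 0) (bv 1) from h5 _ _,
    show R (bv 2) (bv 0) = - R (bv 0) (bv 2) from h5 _ _,
    show R (bv 3) (bv 0) = - R (bv 0) (bv 3) from h5 _ _,
    show R (bv 2) (bv 1) = - R (bv 1) (bv 2) from h5 _ _,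
    show R (bv 3) (bv 1) = - R (bv 1) (bv 3) from h5 _ _,
    show R (bv 3) (bv 2) = - R (bv 2) (bv 3) from h5 _ _]
  simp only [ee]
  module

/-- first members of basis pairs -/
def pf : Fin 6 → Fin 4 := ![0, 0, 0, 1, 1, 2]
/-- second members of basis pairs -/
def ps : Fin 6 → Fin 4 := ![1, 2, 3, 2, 3, 3]

/-- The coordinates of a curvature tensor, as a linear map. -/
def theta : curvatureSpace 2 →ₗ[ℝ] (Fin 6 → Fin 5 → ℝ) where
  toFun R := fun k => coordOf ((R : (Fin 2 → ℂ) → (Fin 2 → ℂ) → Matrix (Fin 2) (Fin 2) ℂ)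
    (bv (pf k)) (bv (ps k)))
  map_add' R S := by
    funext k j
    fin_cases j <;>
      simp [coordOf, Submodule.coe_add, Pi.add_apply, Matrix.add_apply]
  map_smul' r R := by
    funext k j
    fin_cases j <;>
      simp [coordOf, Submodule.coe_smul, Pi.smul_apply, Matrix.smul_apply, Complex.real_smul]

lemma cc_bv_00 : cc 0 (bv 0) = (1:ℝ) := by
  norm_num [cc, bv, Matrix.vecHead, Matrix.vecTail]
lemma cc_bv_01 : cc 0 (bv 1) = (0:ℝ) := by
  norm_num [cc, bv, Matrix.vecHead, Matrix.vecTail]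
lemma cc_bv_02 : cc 0 (bv 2) = (0:ℝ) := by
  simp [cc, bv]
lemma cc_bv_03 : cc 0 (bv 3) = (0:ℝ) := by
  simp [cc, bv]
lemma cc_bv_10 : cc 1 (bv 0) = (0:ℝ) := by
  norm_num [cc, bv, Matrix.vecHead, Matrix.vecTail]
lemma cc_bv_11 : cc 1 (bv 1) = (1:ℝ) := by
  norm_num [cc, bv, Matrix.vecHead, Matrix.vecTail]
lemma cc_bv_12 : cc 1 (bv 2) = (0:ℝ) := by
  simp [cc, bv]
lemma cc_bv_13 : cc 1 (bv 3) = (0:ℝ) := by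
  simp [cc, bv]
lemma cc_bv_20 : cc 2 (bv 0) = (0:ℝ) := by
  simp [cc, bv]
lemma cc_bv_21 : cc 2 (bv 1) = (0:ℝ) := by
  simp [cc, bv]
lemma cc_bv_22 : cc 2 (bv 2) = (1:ℝ) := by
  simp [cc, bv]
lemma cc_bv_23 : cc 2 (bv 3) = (0:ℝ) := by
  simp [cc, bv]
lemma cc_bv_30 : cc 3 (bv 0) = (0:ℝ) := by
  simp [cc, bv]
lemma cc_bv_31 : cc 3 (bv 1) = (0:ℝ) := by
  simp [cc, bv]
lemma cc_bv_32 : cc 3 (bv 2) = (0:ℝ) := by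
  simp [cc, bv]
lemma cc_bv_33 : cc 3 (bv 3) = (1:ℝ) := by
  simp [cc, bv]

lemma theta_mkCurv (c : Fin 6 → Fin 5 → ℝ) (hc : bianchiMap c = 0) :
    theta ⟨mkCurv c, mkCurv_mem c hc⟩ = c := by
  funext k
  fin_cases k
  · show coordOf (mkCurv c (bv 0) (bv 1)) = c 0
    rw [show mkCurv c (bv 0) (bv 1) = matOf (c 0) from by
      simp [mkCurv, ee, cc_bv_00, cc_bv_01, cc_bv_02, cc_bv_03, cc_bv_10, cc_bv_11, cc_bv_12, cc_bv_13, cc_bv_20, cc_bv_21, cc_bv_22, cc_bv_23, cc_bv_30, cc_bv_31, cc_bv_32, cc_bv_33], coordOf_matOf]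
  · show coordOf (mkCurv c (bv 0) (bv 2)) = c 1
    rw [show mkCurv c (bv 0) (bv 2) = matOf (c 1) from by
      simp [mkCurv, ee, cc_bv_00, cc_bv_01, cc_bv_02, cc_bv_03, cc_bv_10, cc_bv_11, cc_bv_12, cc_bv_13, cc_bv_20, cc_bv_21, cc_bv_22, cc_bv_23, cc_bv_30, cc_bv_31, cc_bv_32, cc_bv_33], coordOf_matOf]
  · show coordOf (mkCurv c (bv 0) (bv 3)) = c 2
    rw [show mkCurv c (bv 0) (bv 3) = matOf (c 2) from by
      simp [mkCurv, ee, cc_bv_00, cc_bv_01, cc_bv_02, cc_bv_03, cc_bv_10, cc_bv_11, cc_bv_12, cc_bv_13, cc_bv_20, cc_bv_21, cc_bv_22, cc_bv_23, cc_bv_30, cc_bv_31, cc_bv_32, cc_bv_33], coordOf_matOf]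
  · show coordOf (mkCurv c (bv 1) (bv 2)) = c 3
    rw [show mkCurv c (bv 1) (bv 2) = matOf (c 3) from by
      simp [mkCurv, ee, cc_bv_00, cc_bv_01, cc_bv_02, cc_bv_03, cc_bv_10, cc_bv_11, cc_bv_12, cc_bv_13, cc_bv_20, cc_bv_21, cc_bv_22, cc_bv_23, cc_bv_30, cc_bv_31, cc_bv_32, cc_bv_33], coordOf_matOf]
  · show coordOf (mkCurv c (bv 1) (bv 3)) = c 4
    rw [show mkCurv c (bv 1) (bv 3) = matOf (c 4) from by
      simp [mkCurv, ee, cc_bv_00, cc_bv_01, cc_bv_02, cc_bv_03, cc_bv_10, cc_bv_11, cc_bv_12, cc_bv_13, cc_bv_20, cc_bv_21, cc_bv_22, cc_bv_23, cc_bv_30, cc_bv_31, cc_bv_32, cc_bv_33], coordOf_matOf]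
  · show coordOf (mkCurv c (bv 2) (bv 3)) = c 5
    rw [show mkCurv c (bv 2) (bv 3) = matOf (c 5) from by
      simp [mkCurv, ee, cc_bv_00, cc_bv_01, cc_bv_02, cc_bv_03, cc_bv_10, cc_bv_11, cc_bv_12, cc_bv_13, cc_bv_20, cc_bv_21, cc_bv_22, cc_bv_23, cc_bv_30, cc_bv_31, cc_bv_32, cc_bv_33], coordOf_matOf]

lemma theta_injective : Function.Injective theta := by
  rw [injective_iff_map_eq_zero]
  rintro ⟨f, hf⟩ hth
  obtain ⟨h1, h2, h3, h4, h5, h6, h7⟩ := hf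
  have hzero : ∀ k : Fin 6, f (bv (pf k)) (bv (ps k)) = 0 := by
    intro k
    have hco : coordOf (f (bv (pf k)) (bv (ps k))) = 0 := congrFun hth k
    rw [← matOf_coordOf (h6 (bv (pf k)) (bv (ps k))), hco, matOf_zero]
  apply Subtype.ext
  funext x y
  show f x y = 0
  rw [expand_basis f h1 h2 h3 h4 h5 x y,
    show f (bv 0) (bv 1) = 0 from hzero 0, show f (bv 0) (bv 2) = 0 from hzero 1,
    show f (bv 0) (bv 3) = 0 from hzero 2, show f (bv 1) (bv 2) = 0 from hzero 3,
    show f (bv 1) (bv 3) = 0 from hzero 4, show f (bv 2) (bv 3) = 0 from hzero 5]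
  simp

lemma mulVec_bv0 (X : Matrix (Fin 2) (Fin 2) ℂ) : X.mulVec (bv 0) = ![X 0 0, X 1 0] := by
  funext j; fin_cases j <;> simp [bv, Matrix.mulVec, dotProduct, Fin.sum_univ_two]
lemma mulVec_bv1 (X : Matrix (Fin 2) (Fin 2) ℂ) : X.mulVec (bv 1) = ![X 0 1, X 1 1] := by
  funext j; fin_cases j <;> simp [bv, Matrix.mulVec, dotProduct, Fin.sum_univ_two]
lemma mulVec_bv2 (X : Matrix (Fin 2) (Fin 2) ℂ) :
    X.mulVec (bv 2) = ![Complex.I * X 0 0, Complex.I * X 1 0] := by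
  funext j; fin_cases j <;>
    · simp [bv, Matrix.mulVec, dotProduct, Fin.sum_univ_two]
      ring
lemma mulVec_bv3 (X : Matrix (Fin 2) (Fin 2) ℂ) :
    X.mulVec (bv 3) = ![Complex.I * X 0 1, Complex.I * X 1 1] := by
  funext j; fin_cases j <;>
    · simp [bv, Matrix.mulVec, dotProduct, Fin.sum_univ_two]
      ring

lemma range_theta : LinearMap.range theta = LinearMap.ker bianchiMap := by
  apply le_antisymm
  · rintro _ ⟨⟨f, hf⟩, rfl⟩
    obtain ⟨h1, h2, h3, h4, h5, h6, h7⟩ := hf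
    simp only [LinearMap.mem_ker]
    obtain ⟨G0a, G0b, G0c⟩ := gfacts (h6 (bv 0) (bv 1))
    obtain ⟨G1a, G1b, G1c⟩ := gfacts (h6 (bv 0) (bv 2))
    obtain ⟨G2a, G2b, G2c⟩ := gfacts (h6 (bv 0) (bv 3))
    obtain ⟨G3a, G3b, G3c⟩ := gfacts (h6 (bv 1) (bv 2))
    obtain ⟨G4a, G4b, G4c⟩ := gfacts (h6 (bv 1) (bv 3))
    obtain ⟨G5a, G5b, G5c⟩ := gfacts (h6 (bv 2) (bv 3))
    have hB012 := h7 (bv 0) (bv 1) (bv 2)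
    rw [show f (bv 2) (bv 0) = - f (bv 0) (bv 2) from h5 _ _] at hB012
    simp only [mulVec_bv0, mulVec_bv1, mulVec_bv2, mulVec_bv3] at hB012
    have B012r0 := congrArg Complex.re (congrFun hB012 0)
    have B012i0 := congrArg Complex.im (congrFun hB012 0)
    have B012r1 := congrArg Complex.re (congrFun hB012 1)
    have B012i1 := congrArg Complex.im (congrFun hB012 1)
    simp [Matrix.neg_apply] at B012r0 B012i0 B012r1 B012i1
    have hB013 := h7 (bv 0) (bv 1) (bv 3)
    rw [show f (bv 3) (bv 0) = - f (bv 0) (bv 3) from h5 _ _] at hB013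
    simp only [mulVec_bv0, mulVec_bv1, mulVec_bv2, mulVec_bv3] at hB013
    have B013r0 := congrArg Complex.re (congrFun hB013 0)
    have B013i0 := congrArg Complex.im (congrFun hB013 0)
    have B013r1 := congrArg Complex.re (congrFun hB013 1)
    have B013i1 := congrArg Complex.im (congrFun hB013 1)
    simp [Matrix.neg_apply] at B013r0 B013i0 B013r1 B013i1
    have hB023 := h7 (bv 0) (bv 2) (bv 3)
    rw [show f (bv 3) (bv 0) = - f (bv 0) (bv 3) from h5 _ _] at hB023
    simp only [mulVec_bv0, mulVec_bv1, mulVec_bv2, mulVec_bv3] at hB023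
    have B023r0 := congrArg Complex.re (congrFun hB023 0)
    have B023i0 := congrArg Complex.im (congrFun hB023 0)
    have B023r1 := congrArg Complex.re (congrFun hB023 1)
    have B023i1 := congrArg Complex.im (congrFun hB023 1)
    simp [Matrix.neg_apply] at B023r0 B023i0 B023r1 B023i1
    have hB123 := h7 (bv 1) (bv 2) (bv 3)
    rw [show f (bv 3) (bv 1) = - f (bv 1) (bv 3) from h5 _ _] at hB123
    simp only [mulVec_bv0, mulVec_bv1, mulVec_bv2, mulVec_bv3] at hB123
    have B123r0 := congrArg Complex.re (congrFun hB123 0)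
    have B123i0 := congrArg Complex.im (congrFun hB123 0)
    have B123r1 := congrArg Complex.re (congrFun hB123 1)
    have B123i1 := congrArg Complex.im (congrFun hB123 1)
    simp [Matrix.neg_apply] at B123r0 B123i0 B123r1 B123i1
    funext i
    fin_cases i
    · show -(f (bv 0) (bv 1) 0 0).im + (f (bv 1) (bv 2) 0 0).re - (f (bv 0) (bv 2) 0 1).re = 0
      linarith [B012r0, B012i0, B012r1, B012i1, B013r0, B013i0, B013r1, B013i1, B023r0, B023i0, B023r1, B023i1, B123r0, B123i0, B123r1, B123i1, G0a, G0b, G0c, G1a, G1b, G1c, G2a, G2b, G2c, G3a, G3b, G3c, G4a, G4b, G4c, G5a, G5b, G5c]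
    · show (f (bv 0) (bv 1) 0 0).re + (f (bv 1) (bv 2) 0 0).im = 0
      linarith [B012r0, B012i0, B012r1, B012i1, B013r0, B013i0, B013r1, B013i1, B023r0, B023i0, B023r1, B023i1, B123r0, B123i0, B123r1, B123i1, G0a, G0b, G0c, G1a, G1b, G1c, G2a, G2b, G2c, G3a, G3b, G3c, G4a, G4b, G4c, G5a, G5b, G5c]
    · show (f (bv 1) (bv 2) 1 0).re - (f (bv 0) (bv 2) 1 1).re = 0
      linarith [B012r0, B012i0, B012r1, B012i1, B013r0, B013i0, B013r1, B013i1, B023r0, B023i0, B023r1, B023i1, B123r0, B123i0, B123r1, B123i1, G0a, G0b, G0c, G1a, G1b, G1c, G2a, G2b, G2c, G3a, G3b, G3c, G4a, G4b, G4c, G5a, G5b, G5c]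
    · show (f (bv 0) (bv 1) 1 0).re - (f (bv 0) (bv 2) 0 0).im = 0
      linarith [B012r0, B012i0, B012r1, B012i1, B013r0, B013i0, B013r1, B013i1, B023r0, B023i0, B023r1, B023i1, B123r0, B123i0, B123r1, B123i1, G0a, G0b, G0c, G1a, G1b, G1c, G2a, G2b, G2c, G3a, G3b, G3c, G4a, G4b, G4c, G5a, G5b, G5c]
    · show (f (bv 1) (bv 3) 0 0).re - (f (bv 0) (bv 3) 0 1).re = 0
      linarith [B012r0, B012i0, B012r1, B012i1, B013r0, B013i0, B013r1, B013i1, B023r0, B023i0, B023r1, B023i1, B123r0, B123i0, B123r1, B123i1, G0a, G0b, G0c, G1a, G1b, G1c, G2a, G2b, G2c, G3a, G3b, G3c, G4a, G4b, G4c, G5a, G5b, G5c]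
    · show (f (bv 0) (bv 1) 0 1).re + (f (bv 1) (bv 3) 0 0).im = 0
      linarith [B012r0, B012i0, B012r1, B012i1, B013r0, B013i0, B013r1, B013i1, B023r0, B023i0, B023r1, B023i1, B123r0, B123i0, B123r1, B123i1, G0a, G0b, G0c, G1a, G1b, G1c, G2a, G2b, G2c, G3a, G3b, G3c, G4a, G4b, G4c, G5a, G5b, G5c]
    · show -(f (bv 0) (bv 1) 0 0).im + (f (bv 1) (bv 3) 1 0).re - (f (bv 0) (bv 3) 1 1).re = 0
      linarith [B012r0, B012i0, B012r1, B012i1, B013r0, B013i0, B013r1, B013i1, B023r0, B023i0, B023r1, B023i1, B123r0, B123i0, B123r1, B123i1, G0a, G0b, G0c, G1a, G1b, G1c, G2a, G2b, G2c, G3a, G3b, G3c, G4a, G4b, G4c, G5a, G5b, G5c]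
    · show (f (bv 0) (bv 1) 1 1).re - (f (bv 0) (bv 3) 0 0).im = 0
      linarith [B012r0, B012i0, B012r1, B012i1, B013r0, B013i0, B013r1, B013i1, B023r0, B023i0, B023r1, B023i1, B123r0, B123i0, B123r1, B123i1, G0a, G0b, G0c, G1a, G1b, G1c, G2a, G2b, G2c, G3a, G3b, G3c, G4a, G4b, G4c, G5a, G5b, G5c]
    · show (f (bv 2) (bv 3) 0 0).re + (f (bv 0) (bv 3) 0 0).im = 0
      linarith [B012r0, B012i0, B012r1, B012i1, B013r0, B013i0, B013r1, B013i1, B023r0, B023i0, B023r1, B023i1, B123r0, B123i0, B123r1, B123i1, G0a, G0b, G0c, G1a, G1b, G1c, G2a, G2b, G2c, G3a, G3b, G3c, G4a, G4b, G4c, G5a, G5b, G5c]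
    · show (f (bv 0) (bv 2) 0 1).re + (f (bv 2) (bv 3) 0 0).im - (f (bv 0) (bv 3) 0 0).re = 0
      linarith [B012r0, B012i0, B012r1, B012i1, B013r0, B013i0, B013r1, B013i1, B023r0, B023i0, B023r1, B023i1, B123r0, B123i0, B123r1, B123i1, G0a, G0b, G0c, G1a, G1b, G1c, G2a, G2b, G2c, G3a, G3b, G3c, G4a, G4b, G4c, G5a, G5b, G5c]
    · show -(f (bv 0) (bv 2) 0 0).im + (f (bv 2) (bv 3) 1 0).re = 0
      linarith [B012r0, B012i0, B012r1, B012i1, B013r0, B013i0, B013r1, B013i1, B023r0, B023i0, B023r1, B023i1, B123r0, B123i0, B123r1, B123i1, G0a, G0b, G0c, G1a, G1b, G1c, G2a, G2b, G2c, G3a, G3b, G3c, G4a, G4b, G4c, G5a, G5b, G5c]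
    · show (f (bv 0) (bv 2) 1 1).re - (f (bv 0) (bv 3) 1 0).re = 0
      linarith [B012r0, B012i0, B012r1, B012i1, B013r0, B013i0, B013r1, B013i1, B023r0, B023i0, B023r1, B023i1, B123r0, B123i0, B123r1, B123i1, G0a, G0b, G0c, G1a, G1b, G1c, G2a, G2b, G2c, G3a, G3b, G3c, G4a, G4b, G4c, G5a, G5b, G5c]
    · show (f (bv 2) (bv 3) 0 1).re + (f (bv 1) (bv 3) 0 0).im = 0
      linarith [B012r0, B012i0, B012r1, B012i1, B013r0, B013i0, B013r1, B013i1, B023r0, B023i0, B023r1, B023i1, B123r0, B123i0, B123r1, B123i1, G0a, G0b, G0c, G1a, G1b, G1c, G2a, G2b, G2c, G3a, G3b, G3c, G4a, G4b, G4c, G5a, G5b, G5c]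
    · show (f (bv 1) (bv 2) 0 1).re - (f (bv 1) (bv 3) 0 0).re = 0
      linarith [B012r0, B012i0, B012r1, B012i1, B013r0, B013i0, B013r1, B013i1, B023r0, B023i0, B023r1, B023i1, B123r0, B123i0, B123r1, B123i1, G0a, G0b, G0c, G1a, G1b, G1c, G2a, G2b, G2c, G3a, G3b, G3c, G4a, G4b, G4c, G5a, G5b, G5c]
    · show -(f (bv 1) (bv 2) 0 0).im + (f (bv 2) (bv 3) 1 1).re = 0
      linarith [B012r0, B012i0, B012r1, B012i1, B013r0, B013i0, B013r1, B013i1, B023r0, B023i0, B023r1, B023i1, B123r0, B123i0, B123r1, B123i1, G0a, G0b, G0c, G1a, G1b, G1c, G2a, G2b, G2c, G3a, G3b, G3c, G4a, G4b, G4c, G5a, G5b, G5c]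
    · show (f (bv 1) (bv 2) 1 1).re + (f (bv 2) (bv 3) 0 0).im - (f (bv 1) (bv 3) 1 0).re = 0
      linarith [B012r0, B012i0, B012r1, B012i1, B013r0, B013i0, B013r1, B013i1, B023r0, B023i0, B023r1, B023i1, B123r0, B123i0, B123r1, B123i1, G0a, G0b, G0c, G1a, G1b, G1c, G2a, G2b, G2c, G3a, G3b, G3c, G4a, G4b, G4c, G5a, G5b, G5c]
  · intro c hc
    rw [LinearMap.mem_ker] at hc
    exact ⟨⟨mkCurv c, mkCurv_mem c hc⟩, theta_mkCurv c hc⟩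

end

end Curv2

/-- **Dimension of the space of curvature tensors `K(𝔤₂)`.**
For `n = 2`, `K(𝔤₂) ≅ S²(V*) ⊕ V ⊗ S³(V*) ⊕ ℂ ⊕ ℝ` for `V = ℝ²`, so its real dimension
is `3 + 8 + 2 + 1 = 14`. -/
theorem curvatureSpace_two_finrank :
    Module.finrank ℝ (curvatureSpace 2) = 14 := by
  have h1 : Module.finrank ℝ (curvatureSpace 2)
      = Module.finrank ℝ (LinearMap.range Curv2.theta) :=
    (LinearMap.finrank_range_of_inj Curv2.theta_injective).symm
  rw [h1, Curv2.range_theta]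
  have h2 := LinearMap.finrank_range_add_finrank_ker Curv2.bianchiMap
  have h3 : Module.finrank ℝ (LinearMap.range Curv2.bianchiMap) = 16 := by
    rw [LinearMap.range_eq_top.mpr Curv2.bianchiMap_surjective]
    simp [Module.finrank_fintype_fun_eq_card]
  have h4 : Module.finrank ℝ (Fin 6 → Fin 5 → ℝ) = 30 := by
    simp [Module.finrank_pi_fintype, Module.finrank_fintype_fun_eq_card]
  omega
end

section
/- For every natural number n ≥ 1, the Cartan characters s_k = k − 1 + n(n + (k−2)(n+1−k)) for 2 ≤ k ≤ n+1 satisfy the identity ∑_{k=2}^{n+1} (k − 1 + n(n + (k−2)(n+1−k))) = C(n+1,2) + n·C(n+2,3), where C(a,b) is the binomial coefficient; the right-hand side equals the dimension of S²(V*) ⊕ V ⊗ S³(V*) for V = ℝⁿ, the space of curvature tensors of integrable torsion-free S¹·GL(n,ℝ)-structures. -/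
lemma sumIdZ (m : ℕ) : (∑ j ∈ Finset.range m, (j : ℤ)) * 2 = m * (m - 1) := by
  induction m with
  | zero => simp
  | succ k ih =>
    rw [Finset.sum_range_succ]
    push_cast
    push_cast at ih
    ring_nf
    ring_nf at ih
    linarith

lemma sumSqZ (m : ℕ) : (∑ j ∈ Finset.range m, (j : ℤ)^2) * 6 = m * (m - 1) * (2 * m - 1) := by
  induction m with
  | zero => simp
  | succ k ih =>
    rw [Finset.sum_range_succ]
    push_cast
    push_cast at ih
    ring_nf
    ring_nf at ih
    linarith

lemma chooseTwoZ (m : ℕ) : (Nat.choose (m + 1) 2 : ℤ) * 2 = (m + 1) * m := by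
  induction m with
  | zero => simp
  | succ k ih =>
    rw [Nat.choose_succ_succ (k + 1) 1, Nat.choose_one_right]
    push_cast
    push_cast at ih
    linarith

lemma chooseThreeZ (m : ℕ) : (Nat.choose (m + 2) 3 : ℤ) * 6 = (m + 2) * (m + 1) * m := by
  induction m with
  | zero => simp
  | succ k ih =>
    rw [Nat.choose_succ_succ (k + 2) 2]
    have h2 := chooseTwoZ (k + 1)
    push_cast
    push_cast at ih h2
    nlinarith [ih, h2]

/-- **Sum of the Cartan characters equals the dimension of the curvature tableau.**
For `n ≥ 1`, `∑_{k=2}^{n+1} (k - 1 + n(n + (k-2)(n+1-k))) = C(n+1,2) + n·C(n+2,3)`,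
the dimension of `S²(V*) ⊕ V ⊗ S³(V*)` for `V = ℝⁿ`. -/
theorem cartan_character_sum (n : ℕ) (hn : 1 ≤ n) :
    (∑ k ∈ Finset.Icc 2 (n + 1),
        ((k : ℤ) - 1 + (n : ℤ) * ((n : ℤ) + ((k : ℤ) - 2) * ((n : ℤ) + 1 - (k : ℤ)))))
      = (Nat.choose (n + 1) 2 : ℤ) + (n : ℤ) * (Nat.choose (n + 2) 3 : ℤ) := by
  have hre : (∑ k ∈ Finset.Icc 2 (n + 1),
        ((k : ℤ) - 1 + (n : ℤ) * ((n : ℤ) + ((k : ℤ) - 2) * ((n : ℤ) + 1 - (k : ℤ)))))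
      = ∑ j ∈ Finset.range n,
        (-(n : ℤ) * (j : ℤ)^2 + ((n : ℤ)^2 - n + 1) * j + ((n : ℤ)^2 + 1)) := by
    rw [← Finset.Ico_add_one_right_eq_Icc, Finset.sum_Ico_eq_sum_range]
    simp only [show n + 1 + 1 - 2 = n from by omega]
    apply Finset.sum_congr rfl
    intro j _
    push_cast
    ring
  rw [hre]
  simp only [Finset.sum_add_distrib, ← Finset.mul_sum, Finset.sum_const, Finset.card_range,
    nsmul_eq_mul]
  have h1 := sumIdZ n
  have h2 := sumSqZ n
  have c2 := chooseTwoZ n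
  have c3 := chooseThreeZ n
  nlinarith [h1, h2, c2, c3]
end

section
/- For every natural number n ≥ 1, the Cartan characters s_k = k − 1 + n(n + (k−2)(n+1−k)) for 2 ≤ k ≤ n+1 satisfy Cartan's test with equality: ∑_{k=2}^{n+1} k·(k − 1 + n(n + (k−2)(n+1−k))) = 2·C(n+2,3) + 2n·C(n+3,4), where C(a,b) is the binomial coefficient; the right-hand side equals the dimension of the first prolongation of the curvature tableau of integrable torsion-free S¹·GL(n,ℝ)-structures. -/
/-!
The summands for `k = 0` and `k = 1` vanish (`s_1 = 0`), so the sum may be taken over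
`0 ≤ k ≤ n + 1`. Since `k · s_k` is a cubic polynomial in `k`, its partial sums have a closed
form (a Faulhaber-type identity, proved by induction on the number of terms); evaluating it at
`n + 2` terms and writing the binomial coefficients as products of consecutive integers reduces the claim to a
polynomial identity in `n`.
-/

open Finset Nat

/-- The Cartan character `s_k` of the informal statement. -/
def cartanCharacter (n k : ℤ) : ℤ := k - 1 + n * (n + (k - 2) * (n + 1 - k))

lemma cartanCharacter_one (n : ℤ) : cartanCharacter n 1 = 0 := by
  simp only [cartanCharacter]
  ring

lemma twelve_mul_sum_range_mul_cartanCharacter (n : ℤ) (m : ℕ) :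
    12 * ∑ k ∈ range m, (k : ℤ) * cartanCharacter n k
      = -3 * n * (m * (m - 1)) ^ 2 + 2 * (n ^ 2 + 3 * n + 1) * (m * (m - 1) * (2 * m - 1))
        - 6 * (n + 1) ^ 2 * (m * (m - 1)) := by
  induction m with
  | zero => simp
  | succ m ih =>
    rw [sum_range_succ, mul_add, ih, cartanCharacter]
    push_cast
    ring

lemma sum_Icc_two_eq_sum_range {M : Type*} [AddCommMonoid M] (f : ℕ → M) (h₀ : f 0 = 0)
    (h₁ : f 1 = 0) (m : ℕ) : ∑ k ∈ Icc 2 m, f k = ∑ k ∈ range (m + 1), f k := by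
  refine sum_subset (fun k hk ↦ by simp only [mem_Icc, mem_range] at hk ⊢; omega) ?_
  intro k hk hk'
  simp only [mem_Icc, mem_range] at hk hk'
  obtain rfl | rfl : k = 0 ∨ k = 1 := by omega
  exacts [h₀, h₁]

lemma cast_choose_three (n : ℕ) : 6 * ((n + 2).choose 3 : ℤ) = (n + 2) * (n + 1) * n := by
  have h : n.ascFactorial 3 = 3 ! * (n + 2).choose 3 := ascFactorial_eq_factorial_mul_choose' n 3
  simp only [ascFactorial_succ, ascFactorial_zero, factorial] at h
  exact_mod_cast h.symm.trans (by ring)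

lemma cast_choose_four (n : ℕ) :
    24 * ((n + 3).choose 4 : ℤ) = (n + 3) * (n + 2) * (n + 1) * n := by
  have h : n.ascFactorial 4 = 4 ! * (n + 3).choose 4 := ascFactorial_eq_factorial_mul_choose' n 4
  simp only [ascFactorial_succ, ascFactorial_zero, factorial] at h
  exact_mod_cast h.symm.trans (by ring)

theorem cartan_test_sum_general (n : ℕ) :
    (∑ k ∈ Finset.Icc 2 (n + 1),
        (k : ℤ) * ((k : ℤ) - 1 + (n : ℤ) * ((n : ℤ) + ((k : ℤ) - 2) * ((n : ℤ) + 1 - (k : ℤ)))))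
      = 2 * (Nat.choose (n + 2) 3 : ℤ) + 2 * (n : ℤ) * (Nat.choose (n + 3) 4 : ℤ) := by
  change ∑ k ∈ Icc 2 (n + 1), (k : ℤ) * cartanCharacter n k = _
  rw [sum_Icc_two_eq_sum_range _ (by simp) (by simp [cartanCharacter_one])]
  refine mul_left_cancel₀ (by norm_num : (12 : ℤ) ≠ 0) ?_
  rw [twelve_mul_sum_range_mul_cartanCharacter]
  push_cast
  linear_combination (-4) * cast_choose_three n - (n : ℤ) * cast_choose_four n

/-- **Cartan's test holds with equality for the curvature tableau.**
For `n ≥ 1`, `∑_{k=2}^{n+1} k·(k - 1 + n(n + (k-2)(n+1-k))) = 2·C(n+2,3) + 2n·C(n+3,4)`,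
the dimension of the first prolongation of the tableau of integrable torsion-free
`S¹·GL(n,ℝ)`-structures. -/
theorem cartan_test_sum (n : ℕ) (hn : 1 ≤ n) :
    (∑ k ∈ Finset.Icc 2 (n + 1),
        (k : ℤ) * ((k : ℤ) - 1 + (n : ℤ) * ((n : ℤ) + ((k : ℤ) - 2) * ((n : ℤ) + 1 - (k : ℤ)))))
      = 2 * (Nat.choose (n + 2) 3 : ℤ) + 2 * (n : ℤ) * (Nat.choose (n + 3) 4 : ℤ) :=
  cartan_test_sum_general n
end
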